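/- arXiv:1412.3680 — 5 statements merged into one kernel-verified Lean document; each statement's English description precedes it below -/
import Mathlib

section
/- Let p0, p1 be probability vectors on a finite set X and let σ0, σ1 be n×n density matrices. A classical-to-quantum channel Γ with Γ(p0) = σ0 and Γ(p1) = σ1 exists if and only if D_f(p0‖p1) ≥ D_f^max(σ0‖σ1) holds for every convex continuous function f : [0,∞) → ℝ. -/
open Matrix
open scoped Kronecker ComplexOrder

noncomputable section

/-- A probability vector on a finite set. -/
def ProbVec {X : Type*} [Fintype X] (p : X → ℝ) : Prop :=
  (∀ x, 0 ≤ p x) ∧ ∑ x, p x = 1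

/-- A density matrix: positive semidefinite with trace one. -/
def IsDensityMatrix {n : ℕ} (ρ : Matrix (Fin n) (Fin n) ℂ) : Prop :=
  ρ.PosSemidef ∧ ρ.trace = 1

/-- The action of a classical-to-quantum channel, given by a family of density
matrices `ρ`, on a probability vector `p`. -/
def cqApply {X : Type*} [Fintype X] {n : ℕ} (ρ : X → Matrix (Fin n) (Fin n) ℂ)
    (p : X → ℝ) : Matrix (Fin n) (Fin n) ℂ :=
  ∑ x, (p x : ℂ) • ρ x

/-- The recession slope `lim_{λ → ∞} f(λ)/λ`, as an extended real number.
(For convex continuous `f` the limit exists and equals this limsup.) -/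
def recessionSlope (f : ℝ → ℝ) : EReal :=
  Filter.limsup (fun lam : ℝ => ((f lam / lam : ℝ) : EReal)) Filter.atTop

/-- The `f`-divergence of two probability vectors, valued in `ℝ ∪ {+∞}`
(with the convention `0 * ∞ = 0`, which holds for `EReal` multiplication). -/
def fDiv {X : Type*} [Fintype X] (f : ℝ → ℝ) (p0 p1 : X → ℝ) : EReal :=
  ((∑ x, if 0 < p1 x then p1 x * f (p0 x / p1 x) else 0 : ℝ) : EReal)
    + ((∑ x, if 0 < p1 x then 0 else p0 x : ℝ) : EReal) * recessionSlope f

/-- The maximal `f`-divergence: the infimum of `D_f(q0‖q1)` over all classical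
families mapped onto `(σ0, σ1)` by some classical-to-quantum channel. -/
def DfMax {n : ℕ} (f : ℝ → ℝ) (σ0 σ1 : Matrix (Fin n) (Fin n) ℂ) : EReal :=
  sInf { d : EReal |
    ∃ (m : ℕ) (q0 q1 : Fin m → ℝ) (ρ : Fin m → Matrix (Fin n) (Fin n) ℂ),
      ProbVec q0 ∧ ProbVec q1 ∧ (∀ x, IsDensityMatrix (ρ x)) ∧
      cqApply ρ q0 = σ0 ∧ cqApply ρ q1 = σ1 ∧ d = fDiv f q0 q1 }

/-- Spectral functional calculus for Hermitian matrices (junk value `0` on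
non-Hermitian input). -/
def hermCFC {n : ℕ} (f : ℝ → ℝ) (A : Matrix (Fin n) (Fin n) ℂ) :
    Matrix (Fin n) (Fin n) ℂ :=
  if hA : A.IsHermitian then
    (hA.eigenvectorUnitary : Matrix (Fin n) (Fin n) ℂ) *
      Matrix.diagonal (fun i => (f (hA.eigenvalues i) : ℂ)) *
      (star (hA.eigenvectorUnitary : Matrix (Fin n) (Fin n) ℂ))
  else 0

/-- Spectral pseudo-inverse: invert the nonzero eigenvalues. -/
def pinvMat {n : ℕ} (A : Matrix (Fin n) (Fin n) ℂ) : Matrix (Fin n) (Fin n) ℂ :=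
  hermCFC (fun x => if x = 0 then 0 else x⁻¹) A

/-- Orthogonal projection onto the range of a Hermitian matrix
(spectral projection onto the nonzero eigenvalues). -/
def rangeProj {n : ℕ} (A : Matrix (Fin n) (Fin n) ℂ) : Matrix (Fin n) (Fin n) ℂ :=
  hermCFC (fun x => if x = 0 then 0 else 1) A

/-- `A ↦ (A⁺)^{1/2}`, the square root of the spectral pseudo-inverse. -/
def invSqrtMat {n : ℕ} (A : Matrix (Fin n) (Fin n) ℂ) : Matrix (Fin n) (Fin n) ℂ :=
  hermCFC (fun x => if x = 0 then 0 else (Real.sqrt x)⁻¹) A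

/-- Generalized Schur complement of `σ0` with respect to a projection `π`:
`π σ0 π − π σ0 (1−π) · ((1−π) σ0 (1−π))⁺ · (1−π) σ0 π`. -/
def schurCompl {n : ℕ} (σ0 π : Matrix (Fin n) (Fin n) ℂ) :
    Matrix (Fin n) (Fin n) ℂ :=
  π * σ0 * π -
    (π * σ0 * (1 - π)) * pinvMat ((1 - π) * σ0 * (1 - π)) * ((1 - π) * σ0 * π)

/-- `σ̃0`: the generalized Schur complement of `σ0` with respect to the
projection onto the range of `σ1`. -/
def sigmaTilde {n : ℕ} (σ0 σ1 : Matrix (Fin n) (Fin n) ℂ) :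
    Matrix (Fin n) (Fin n) ℂ :=
  schurCompl σ0 (rangeProj σ1)

/-- The closed-form expression
`F_f(σ0,σ1) = tr σ1 f(σ1^{-1/2} σ̃0 σ1^{-1/2}) + (1 − tr σ̃0) L(f)`. -/
def Ff {n : ℕ} (f : ℝ → ℝ) (σ0 σ1 : Matrix (Fin n) (Fin n) ℂ) : EReal :=
  (((σ1 * hermCFC f (invSqrtMat σ1 * sigmaTilde σ0 σ1 * invSqrtMat σ1)).trace.re : ℝ) : EReal)
    + ((1 - (sigmaTilde σ0 σ1).trace.re : ℝ) : EReal) * recessionSlope f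

/-- Operator convexity of a function on `[0,∞)`, via the spectral functional
calculus on positive semidefinite complex matrices. -/
def OperatorConvex (f : ℝ → ℝ) : Prop :=
  ∀ (n : ℕ) (A B : Matrix (Fin n) (Fin n) ℂ), A.PosSemidef → B.PosSemidef →
    ∀ t : ℝ, 0 ≤ t → t ≤ 1 →
      (t • hermCFC f A + (1 - t) • hermCFC f B
        - hermCFC f (t • A + (1 - t) • B)).PosSemidef

/-- A CPTP map between matrix algebras: trace preserving and with positive
semidefinite Choi matrix. -/
def IsCPTP {n k : ℕ}
    (Λ : Matrix (Fin n) (Fin n) ℂ →ₗ[ℂ] Matrix (Fin k) (Fin k) ℂ) : Prop :=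
  (∀ A, (Λ A).trace = A.trace) ∧
    (∑ i : Fin n, ∑ j : Fin n,
      (Λ (Matrix.single i j 1)) ⊗ₖ (Matrix.single i j (1 : ℂ))).PosSemidef

/-- The largest eigenvalue of a Hermitian matrix (junk value `0` otherwise). -/
def lmax {k : ℕ} (W : Matrix (Fin k) (Fin k) ℂ) : ℝ :=
  if h : W.IsHermitian then ⨆ i, h.eigenvalues i else 0

/-- A stochastic matrix (`P y x` is the probability of `y` given `x`). -/
def IsStochastic {X Y : Type*} [Fintype X] [Fintype Y] (P : Y → X → ℝ) : Prop :=
  (∀ y x, 0 ≤ P y x) ∧ ∀ x, ∑ y, P y x = 1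

/-- The action of a stochastic matrix on a probability vector. -/
def stocApply {X Y : Type*} [Fintype X] [Fintype Y] (P : Y → X → ℝ)
    (p : X → ℝ) : Y → ℝ :=
  fun y => ∑ x, P y x * p x

end

/-!
The pairs `(Γ(p0), Γ(p1))`, over all classical-to-quantum channels `Γ`, form a compact convex set
`T`. If `(σ0, σ1) ∉ T`, Hahn–Banach separates it from `T` by a real linear functional `φ`:
`φ < u` on `T` and `u < φ(σ0, σ1)`. The support function `h(a, b) = max_ρ φ(a ρ, b ρ)` over
density matrices `ρ` is sublinear, so `f(t) = h(t, 1)` is convex and continuous with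
`D_f(q0‖q1) = ∑ₓ h(q0 x, q1 x)`. Because `φ` splits over the letters of any classical realization
of `(σ0, σ1)`, `φ(σ0, σ1) ≤ D_f^max(σ0‖σ1)`; but `∑ₓ h(p0 x, p1 x)` is attained by a channel,
hence is `< u`, contradicting `D_f^max(σ0‖σ1) ≤ D_f(p0‖p1)`.
-/

open Set Filter Topology

instance Matrix.locallyConvexSpace {m l 𝕜 E : Type*} [Semiring 𝕜] [PartialOrder 𝕜]
    [AddCommMonoid E] [TopologicalSpace E] [Module 𝕜 E] [LocallyConvexSpace 𝕜 E] :
    LocallyConvexSpace 𝕜 (Matrix m l E) :=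
  Pi.locallyConvexSpace

section DensityMatrix

variable {n : ℕ}

/- The C⋆-norm on matrices induces the entrywise topology, so the closedness of the positive cone
of a C⋆-algebra applies. -/
open scoped MatrixOrder Matrix.Norms.L2Operator in
theorem Matrix.isClosed_setOf_posSemidef {ι : Type*} [Fintype ι] [DecidableEq ι] :
    IsClosed {A : Matrix ι ι ℂ | A.PosSemidef} := by
  simpa only [Matrix.nonneg_iff_posSemidef] using CStarAlgebra.isClosed_nonneg (A := Matrix ι ι ℂ)

theorem Matrix.PosSemidef.normSq_apply_le {ι : Type*} {A : Matrix ι ι ℂ} (hA : A.PosSemidef)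
    (i j : ι) : Complex.normSq (A i j) ≤ (A i i).re * (A j j).re := by
  have hdet := (hA.submatrix ![i, j]).det_nonneg
  rw [det_fin_two] at hdet
  simp only [submatrix_apply, Matrix.cons_val_zero, Matrix.cons_val_one] at hdet
  have hdiag : ∀ k, A k k = ((A k k).re : ℂ) := fun k =>
    Complex.ext rfl (Complex.nonneg_iff.1 hA.diag_nonneg).2.symm
  rw [← hA.isHermitian.apply j i, Complex.star_def, Complex.mul_conj, hdiag i, hdiag j,
    ← Complex.ofReal_mul, ← Complex.ofReal_sub, Complex.zero_le_real] at hdet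
  linarith

theorem IsDensityMatrix.re_apply_self_le_one {ρ : Matrix (Fin n) (Fin n) ℂ}
    (hρ : IsDensityMatrix ρ) (i : Fin n) : (ρ i i).re ≤ 1 := by
  have htr : ∑ k, (ρ k k).re = 1 := by
    simpa [Matrix.trace, Complex.re_sum] using congrArg Complex.re hρ.2
  exact htr ▸ Finset.single_le_sum
    (fun k _ => (Complex.nonneg_iff.1 (hρ.1.diag_nonneg (i := k))).1) (Finset.mem_univ i)

theorem IsDensityMatrix.norm_apply_le_one {ρ : Matrix (Fin n) (Fin n) ℂ}
    (hρ : IsDensityMatrix ρ) (i j : Fin n) : ‖ρ i j‖ ≤ 1 := by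
  refine (pow_le_one_iff_of_nonneg (norm_nonneg _) two_ne_zero).1 ?_
  rw [← Complex.normSq_eq_norm_sq]
  exact (hρ.1.normSq_apply_le i j).trans (mul_le_one₀ (hρ.re_apply_self_le_one i)
    (Complex.nonneg_iff.1 hρ.1.diag_nonneg).1 (hρ.re_apply_self_le_one j))

theorem isClosed_setOf_isDensityMatrix :
    IsClosed {ρ : Matrix (Fin n) (Fin n) ℂ | IsDensityMatrix ρ} :=
  Matrix.isClosed_setOf_posSemidef.inter (isClosed_eq continuous_id.matrix_trace continuous_const)

theorem isCompact_setOf_isDensityMatrix :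
    IsCompact {ρ : Matrix (Fin n) (Fin n) ℂ | IsDensityMatrix ρ} := by
  refine (isCompact_univ_pi fun _ => isCompact_univ_pi fun _ =>
    isCompact_closedBall (0 : ℂ) 1).of_isClosed_subset isClosed_setOf_isDensityMatrix ?_
  intro ρ hρ i _ j _
  simpa using hρ.norm_apply_le_one i j

theorem convex_setOf_isDensityMatrix :
    Convex ℝ {ρ : Matrix (Fin n) (Fin n) ℂ | IsDensityMatrix ρ} := by
  rintro ρ hρ τ hτ a b ha hb hab
  refine ⟨(hρ.1.smul ha).add (hτ.1.smul hb), ?_⟩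
  simp [trace_add, trace_smul, hρ.2, hτ.2, ← Complex.ofReal_add, hab]

end DensityMatrix

structure IsSublinear {E : Type*} [AddCommGroup E] [Module ℝ E] (h : E → ℝ) : Prop where
  smul_of_nonneg : ∀ ⦃c : ℝ⦄, 0 ≤ c → ∀ v, h (c • v) = c * h v
  add_le : ∀ v w, h (v + w) ≤ h v + h w

namespace IsSublinear

theorem convexOn {E : Type*} [AddCommGroup E] [Module ℝ E] {h : E → ℝ} (hh : IsSublinear h) :
    ConvexOn ℝ univ h :=
  ⟨convex_univ, fun v _ w _ a b ha hb _ => by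
    simpa only [hh.smul_of_nonneg ha, hh.smul_of_nonneg hb, smul_eq_mul] using
      hh.add_le (a • v) (b • w)⟩

theorem continuous {E : Type*} [NormedAddCommGroup E] [NormedSpace ℝ E] [FiniteDimensional ℝ E]
    {h : E → ℝ} (hh : IsSublinear h) : Continuous h :=
  continuousOn_univ.1 (hh.convexOn.continuousOn isOpen_univ)

variable {h : ℝ × ℝ → ℝ} (hh : IsSublinear h)
include hh

theorem convexOn_perspective : ConvexOn ℝ univ (fun t => h (t, 1)) :=
  ⟨convex_univ, fun x _ y _ a b ha hb hab => by
    have hpair : ((a • x + b • y, 1) : ℝ × ℝ) = a • (x, 1) + b • (y, 1) := by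
      simp [hab]
    simpa only [hpair] using hh.convexOn.2 (mem_univ (x, 1)) (mem_univ (y, 1)) ha hb hab⟩

theorem continuous_perspective : Continuous (fun t => h (t, 1)) :=
  hh.continuous.comp (continuous_id.prodMk continuous_const)

theorem apply_eq_mul_perspective {a b : ℝ} (hb : 0 < b) : h (a, b) = b * h (a / b, 1) := by
  rw [← hh.smul_of_nonneg hb.le, Prod.smul_mk, smul_eq_mul, smul_eq_mul, mul_div_cancel₀ _ hb.ne',
    mul_one]

theorem tendsto_perspective_div_atTop :
    Tendsto (fun t => h (t, 1) / t) atTop (𝓝 (h (1, 0))) := by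
  have hlim : Tendsto (fun t : ℝ => h (1, t⁻¹)) atTop (𝓝 (h (1, 0))) :=
    (hh.continuous.tendsto _).comp (tendsto_const_nhds.prodMk_nhds tendsto_inv_atTop_zero)
  refine hlim.congr' ?_
  filter_upwards [eventually_gt_atTop 0] with t ht
  rw [hh.apply_eq_mul_perspective (inv_pos.2 ht), div_inv_eq_mul, one_mul, inv_mul_eq_div]

theorem recessionSlope_perspective : recessionSlope (fun t => h (t, 1)) = h (1, 0) :=
  ((continuous_coe_real_ereal.tendsto _).comp hh.tendsto_perspective_div_atTop).limsup_eq

theorem fDiv_perspective {Y : Type*} [Fintype Y] {q0 q1 : Y → ℝ} (hq0 : ∀ y, 0 ≤ q0 y)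
    (hq1 : ∀ y, 0 ≤ q1 y) :
    fDiv (fun t => h (t, 1)) q0 q1 = ((∑ y, h (q0 y, q1 y) : ℝ) : EReal) := by
  rw [fDiv, hh.recessionSlope_perspective, ← EReal.coe_mul, ← EReal.coe_add, Finset.sum_mul,
    ← Finset.sum_add_distrib]
  congr 1
  refine Finset.sum_congr rfl fun y _ => ?_
  split_ifs with hy
  · rw [hh.apply_eq_mul_perspective hy, zero_mul, add_zero]
  · have hq1y : q1 y = 0 := le_antisymm (not_lt.1 hy) (hq1 y)
    rw [zero_add, hq1y, ← hh.smul_of_nonneg (hq0 y), Prod.smul_mk, smul_eq_mul, smul_eq_mul,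
      mul_one, mul_zero]

end IsSublinear

noncomputable def supportFun (S : Set (ℝ × ℝ)) (v : ℝ × ℝ) : ℝ :=
  sSup ((fun s => v.1 * s.1 + v.2 * s.2) '' S)

namespace IsCompact

variable {S : Set (ℝ × ℝ)} (hS : IsCompact S)
include hS

theorem le_supportFun {s : ℝ × ℝ} (hs : s ∈ S) (v : ℝ × ℝ) :
    v.1 * s.1 + v.2 * s.2 ≤ supportFun S v :=
  le_csSup (hS.image (by fun_prop)).bddAbove ⟨s, hs, rfl⟩

theorem exists_supportFun_eq (hne : S.Nonempty) (v : ℝ × ℝ) :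
    ∃ s ∈ S, v.1 * s.1 + v.2 * s.2 = supportFun S v :=
  (hS.image (by fun_prop : Continuous fun s : ℝ × ℝ => v.1 * s.1 + v.2 * s.2)).sSup_mem
    (hne.image _)

theorem isSublinear_supportFun (hne : S.Nonempty) : IsSublinear (supportFun S) where
  smul_of_nonneg c hc v := by
    rw [supportFun, supportFun, ← smul_eq_mul, ← Real.sSup_smul_of_nonneg hc, ← Set.image_smul,
      Set.image_image]
    refine congrArg sSup (Set.image_congr fun s _ => ?_)
    simp only [Prod.smul_fst, Prod.smul_snd, smul_eq_mul]
    ring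
  add_le v w := by
    obtain ⟨s, hs, hsv⟩ := hS.exists_supportFun_eq hne (v + w)
    have hv := hS.le_supportFun hs v
    have hw := hS.le_supportFun hs w
    rw [← hsv, Prod.fst_add, Prod.snd_add]
    linarith

end IsCompact

section CQChannel

variable {X : Type*} [Fintype X] {n : ℕ}

theorem ProbVec.comp_equiv {Y : Type*} [Fintype Y] {p : X → ℝ} (hp : ProbVec p) (e : Y ≃ X) :
    ProbVec (p ∘ e) :=
  ⟨fun y => hp.1 (e y), by rw [← hp.2]; exact e.sum_comp p⟩

theorem fDiv_comp_equiv {Y : Type*} [Fintype Y] (f : ℝ → ℝ) (p0 p1 : X → ℝ) (e : Y ≃ X) :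
    fDiv f (p0 ∘ e) (p1 ∘ e) = fDiv f p0 p1 := by
  simp only [fDiv, Function.comp_apply]
  congr 3 <;> exact Fintype.sum_equiv e _ _ fun _ => rfl

theorem cqApply_comp_equiv {Y : Type*} [Fintype Y] (ρ : X → Matrix (Fin n) (Fin n) ℂ)
    (p : X → ℝ) (e : Y ≃ X) : cqApply (ρ ∘ e) (p ∘ e) = cqApply ρ p :=
  e.sum_comp fun x => (p x : ℂ) • ρ x

theorem DfMax_cqApply_le_fDiv (f : ℝ → ℝ) {p0 p1 : X → ℝ} (hp0 : ProbVec p0) (hp1 : ProbVec p1)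
    {ρ : X → Matrix (Fin n) (Fin n) ℂ} (hρ : ∀ x, IsDensityMatrix (ρ x)) :
    DfMax f (cqApply ρ p0) (cqApply ρ p1) ≤ fDiv f p0 p1 := by
  let e := (Fintype.equivFin X).symm
  refine sInf_le ⟨Fintype.card X, p0 ∘ e, p1 ∘ e, ρ ∘ e, hp0.comp_equiv e, hp1.comp_equiv e,
    fun i => hρ (e i), cqApply_comp_equiv ρ p0 e, cqApply_comp_equiv ρ p1 e,
    (fDiv_comp_equiv f p0 p1 e).symm⟩

def cqPairMap (p0 p1 : X → ℝ) :
    (X → Matrix (Fin n) (Fin n) ℂ) →ₗ[ℝ] Matrix (Fin n) (Fin n) ℂ × Matrix (Fin n) (Fin n) ℂ where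
  toFun ρ := (cqApply ρ p0, cqApply ρ p1)
  map_add' ρ τ := by simp [cqApply, smul_add, Finset.sum_add_distrib]
  map_smul' c ρ := by
    simp only [cqApply, Pi.smul_apply, RingHom.id_apply, Prod.smul_mk, Finset.smul_sum, smul_comm c]

def cqImage (n : ℕ) (p0 p1 : X → ℝ) :
    Set (Matrix (Fin n) (Fin n) ℂ × Matrix (Fin n) (Fin n) ℂ) :=
  cqPairMap p0 p1 '' univ.pi fun _ => {ρ | IsDensityMatrix ρ}

theorem mem_cqImage_iff {p0 p1 : X → ℝ} {σ0 σ1 : Matrix (Fin n) (Fin n) ℂ} :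
    (σ0, σ1) ∈ cqImage n p0 p1 ↔
      ∃ ρ : X → Matrix (Fin n) (Fin n) ℂ, (∀ x, IsDensityMatrix (ρ x)) ∧
        cqApply ρ p0 = σ0 ∧ cqApply ρ p1 = σ1 := by
  simp [cqImage, cqPairMap]

theorem convex_cqImage (p0 p1 : X → ℝ) : Convex ℝ (cqImage n p0 p1) :=
  (convex_pi fun _ _ => convex_setOf_isDensityMatrix).linear_image _

theorem isCompact_cqImage (p0 p1 : X → ℝ) : IsCompact (cqImage n p0 p1) :=
  (isCompact_univ_pi fun _ => isCompact_setOf_isDensityMatrix).image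
    (cqPairMap p0 p1).continuous_of_finiteDimensional

end CQChannel

section SeparatingFunctional

variable {n : ℕ} (φ : Matrix (Fin n) (Fin n) ℂ × Matrix (Fin n) (Fin n) ℂ →L[ℝ] ℝ)

/-- The support function of this set is `(a, b) ↦ max_ρ φ (a • ρ, b • ρ)` over density
matrices `ρ`. -/
def densityImage : Set (ℝ × ℝ) :=
  (fun ρ => (φ (ρ, 0), φ (0, ρ))) '' {ρ | IsDensityMatrix ρ}

theorem isCompact_densityImage : IsCompact (densityImage φ) :=
  isCompact_setOf_isDensityMatrix.image (by fun_prop)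

theorem apply_cqApply {Y : Type*} [Fintype Y] (ρ : Y → Matrix (Fin n) (Fin n) ℂ)
    (q0 q1 : Y → ℝ) :
    φ (cqApply ρ q0, cqApply ρ q1) = ∑ y, (q0 y * φ (ρ y, 0) + q1 y * φ (0, ρ y)) := by
  have hpair : (cqApply ρ q0, cqApply ρ q1) = ∑ y, (q0 y • (ρ y, 0) + q1 y • (0, ρ y)) := by
    ext1 <;> simp [cqApply, Prod.fst_sum, Prod.snd_sum, Complex.coe_smul]
  rw [hpair, map_sum]
  simp only [map_add, map_smul, smul_eq_mul]

theorem apply_cqApply_le_sum_supportFun {Y : Type*} [Fintype Y]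
    {ρ : Y → Matrix (Fin n) (Fin n) ℂ} (hρ : ∀ y, IsDensityMatrix (ρ y)) (q0 q1 : Y → ℝ) :
    φ (cqApply ρ q0, cqApply ρ q1) ≤ ∑ y, supportFun (densityImage φ) (q0 y, q1 y) := by
  rw [apply_cqApply]
  exact Finset.sum_le_sum fun y _ =>
    (isCompact_densityImage φ).le_supportFun ⟨ρ y, hρ y, rfl⟩ (q0 y, q1 y)

variable (hK : {ρ : Matrix (Fin n) (Fin n) ℂ | IsDensityMatrix ρ}.Nonempty)
include hK

theorem exists_apply_cqApply_eq_sum_supportFun {Y : Type*} [Fintype Y] (q0 q1 : Y → ℝ) :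
    ∃ ρ : Y → Matrix (Fin n) (Fin n) ℂ, (∀ y, IsDensityMatrix (ρ y)) ∧
      φ (cqApply ρ q0, cqApply ρ q1) = ∑ y, supportFun (densityImage φ) (q0 y, q1 y) := by
  choose s hs hsq using fun y =>
    (isCompact_densityImage φ).exists_supportFun_eq (hK.image _) (q0 y, q1 y)
  choose ρ hρ hρs using hs
  refine ⟨ρ, hρ, ?_⟩
  rw [apply_cqApply]
  refine Finset.sum_congr rfl fun y _ => ?_
  rw [← hsq y, ← hρs y]

theorem isSublinear_supportFun_densityImage : IsSublinear (supportFun (densityImage φ)) :=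
  (isCompact_densityImage φ).isSublinear_supportFun (hK.image _)

theorem le_DfMax_supportFun_densityImage (σ0 σ1 : Matrix (Fin n) (Fin n) ℂ) :
    ((φ (σ0, σ1) : ℝ) : EReal) ≤ DfMax (fun t => supportFun (densityImage φ) (t, 1)) σ0 σ1 := by
  refine le_sInf ?_
  rintro _ ⟨m, q0, q1, ρ, hq0, hq1, hρ, rfl, rfl, rfl⟩
  rw [(isSublinear_supportFun_densityImage φ hK).fDiv_perspective hq0.1 hq1.1,
    EReal.coe_le_coe_iff]
  exact apply_cqApply_le_sum_supportFun φ hρ q0 q1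

end SeparatingFunctional

theorem cq_channel_exists_iff_DfMax_le_general {X : Type*} [Fintype X] {n : ℕ}
    (p0 p1 : X → ℝ) (hp0 : ProbVec p0) (hp1 : ProbVec p1)
    (σ0 σ1 : Matrix (Fin n) (Fin n) ℂ)
    (hσ0 : IsDensityMatrix σ0) :
    (∃ ρ : X → Matrix (Fin n) (Fin n) ℂ, (∀ x, IsDensityMatrix (ρ x)) ∧
        cqApply ρ p0 = σ0 ∧ cqApply ρ p1 = σ1) ↔
      ∀ f : ℝ → ℝ, ConvexOn ℝ (Set.Ici 0) f → ContinuousOn f (Set.Ici 0) →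
        DfMax f σ0 σ1 ≤ fDiv f p0 p1 := by
  refine ⟨fun ⟨ρ, hρ, h0, h1⟩ f _ _ => h0 ▸ h1 ▸ DfMax_cqApply_le_fDiv f hp0 hp1 hρ, fun hDf => ?_⟩
  rw [← mem_cqImage_iff]
  by_contra hσ
  obtain ⟨φ, u, hφ, hu⟩ := geometric_hahn_banach_closed_point (convex_cqImage p0 p1)
    (isCompact_cqImage p0 p1).isClosed hσ
  have hK : {ρ : Matrix (Fin n) (Fin n) ℂ | IsDensityMatrix ρ}.Nonempty := ⟨σ0, hσ0⟩
  have hh := isSublinear_supportFun_densityImage φ hK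
  have hle := (le_DfMax_supportFun_densityImage φ hK σ0 σ1).trans
    (hDf _ (hh.convexOn_perspective.subset (subset_univ _) (convex_Ici 0))
      hh.continuous_perspective.continuousOn)
  rw [hh.fDiv_perspective hp0.1 hp1.1, EReal.coe_le_coe_iff] at hle
  obtain ⟨ρ, hρ, hρφ⟩ := exists_apply_cqApply_eq_sum_supportFun φ hK p0 p1
  have hlt := hφ _ (mem_cqImage_iff.2 ⟨ρ, hρ, rfl, rfl⟩)
  linarith

/-- A classical-to-quantum channel `Γ` with `Γ(p0) = σ0` and
`Γ(p1) = σ1` exists iff `D_f(p0‖p1) ≥ D_f^max(σ0‖σ1)` for every convex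
continuous `f : [0,∞) → ℝ`. -/
theorem cq_channel_exists_iff_DfMax_le {X : Type*} [Fintype X] {n : ℕ}
    (p0 p1 : X → ℝ) (hp0 : ProbVec p0) (hp1 : ProbVec p1)
    (σ0 σ1 : Matrix (Fin n) (Fin n) ℂ)
    (hσ0 : IsDensityMatrix σ0) (hσ1 : IsDensityMatrix σ1) :
    (∃ ρ : X → Matrix (Fin n) (Fin n) ℂ, (∀ x, IsDensityMatrix (ρ x)) ∧
        cqApply ρ p0 = σ0 ∧ cqApply ρ p1 = σ1) ↔
      ∀ f : ℝ → ℝ, ConvexOn ℝ (Set.Ici 0) f → ContinuousOn f (Set.Ici 0) →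
        DfMax f σ0 σ1 ≤ fDiv f p0 p1 :=
  cq_channel_exists_iff_DfMax_le_general p0 p1 hp0 hp1 σ0 σ1 hσ0
end

section
/- Let f : [0,∞) → ℝ be continuous. Suppose that for every n, every positive definite n×n complex matrix σ1 and every positive semidefinite n×n complex matrix σ0 (of arbitrary positive traces), the infimum of Σ_{x∈X} q1(x)·f(q0(x)/q1(x)) — taken over all finite sets X, all functions q1 : X → (0,∞) and q0 : X → [0,∞), and all families (ρ_x)_{x∈X} of n×n density matrices satisfying Σ_x q0(x)·ρ_x = σ0 and Σ_x q1(x)·ρ_x = σ1 — equals tr(σ1·f(σ1^{−1/2} σ0 σ1^{−1/2})), where σ1^{−1/2} is the inverse of the positive square root of σ1 and f is applied via the spectral functional calculus. Then f is operator convex. -/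
open Matrix
open scoped Kronecker ComplexOrder

/-! Classical representations of `(σ0, σ1)` and `(τ0, τ1)` can be concatenated with weights `t` and
`1 - t` into a representation of the mixture, so the infimum over representations is jointly
convex. For positive definite `S` the hypothesis evaluates this infimum at `(S^{1/2} Z S^{1/2}, S)`
as `tr (S f(Z))`, hence `Z ↦ tr (S f(Z))` is convex on positive definite matrices; continuity of
`f` on `[0, ∞)` extends this to positive semidefinite ones, and a Hermitian matrix whose trace
against every positive definite `S` is nonnegative is positive semidefinite. -/

open Filter Topology

namespace Matrix

variable {m 𝕜 : Type*} [Fintype m] [DecidableEq m] [RCLike 𝕜]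

lemma IsHermitian.tendsto_cfc {A : Matrix m m 𝕜} (hA : A.IsHermitian) {ι : Type*}
    {l : Filter ι} {g : ι → ℝ → ℝ} {g₀ : ℝ → ℝ}
    (hg : ∀ i, Tendsto (fun k => g k (hA.eigenvalues i)) l (𝓝 (g₀ (hA.eigenvalues i)))) :
    Tendsto (fun k => cfc (g k) A) l (𝓝 (cfc g₀ A)) := by
  simp only [hA.cfc_eq, IsHermitian.cfc, Unitary.conjStarAlgAut_apply]
  have hconj : Continuous fun v : m → 𝕜 => (hA.eigenvectorUnitary : Matrix m m 𝕜) *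
      diagonal v * star (hA.eigenvectorUnitary : Matrix m m 𝕜) := by
    fun_prop
  exact (hconj.tendsto _).comp
    (tendsto_pi_nhds.2 fun i => (RCLike.continuous_ofReal.tendsto _).comp (hg i))

lemma cfc_add_smul_one (f : ℝ → ℝ) {A : Matrix m m 𝕜} (hA : A.IsHermitian) (δ : ℝ) :
    cfc f (A + δ • 1) = cfc (fun x => f (x + δ)) A := by
  have hshift : A + δ • 1 = cfc (fun x => x + δ) A :=
    ((cfc_add_const δ (fun x : ℝ => x) A (ha := hA)).trans
      (by rw [cfc_id' ℝ A hA, Algebra.algebraMap_eq_smul_one])).symm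
  rw [hshift, ← cfc_comp' f (· + δ) A ((finite_real_spectrum.image _).continuousOn f)]

lemma PosSemidef.tendsto_cfc_add_smul_one {f : ℝ → ℝ} (hf : ContinuousOn f (Set.Ici 0))
    {A : Matrix m m 𝕜} (hA : A.PosSemidef) :
    Tendsto (fun δ : ℝ => cfc f (A + δ • 1)) (𝓝[>] 0) (𝓝 (cfc f A)) := by
  simp only [cfc_add_smul_one f hA.1]
  refine hA.1.tendsto_cfc fun i => ?_
  have hev := hA.eigenvalues_nonneg i
  refine (hf _ hev).tendsto.comp (tendsto_nhdsWithin_of_tendsto_nhds_of_eventually_within _ ?_ ?_)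
  · exact ((continuous_const_add _).tendsto' 0 _ (add_zero _)).mono_left nhdsWithin_le_nhds
  · filter_upwards [self_mem_nhdsWithin] with δ hδ using add_nonneg hev (le_of_lt hδ)

lemma posSemidef_of_forall_posDef_trace_mul_nonneg {D : Matrix m m 𝕜} (hD : D.IsHermitian)
    (h : ∀ S : Matrix m m 𝕜, S.PosDef → 0 ≤ RCLike.re (S * D).trace) : D.PosSemidef := by
  refine PosSemidef.of_dotProduct_mulVec_nonneg hD fun x =>
    RCLike.nonneg_iff.2 ⟨?_, hD.im_star_dotProduct_mulVec_self x⟩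
  have hlim : Tendsto (fun ε : ℝ => RCLike.re ((vecMulVec x (star x) + ε • 1) * D).trace)
      (𝓝[>] 0) (𝓝 (RCLike.re (star x ⬝ᵥ D *ᵥ x))) := by
    have hcont : Continuous fun ε : ℝ => RCLike.re ((vecMulVec x (star x) + ε • 1) * D).trace := by
      fun_prop
    refine (hcont.tendsto' 0 _ ?_).mono_left nhdsWithin_le_nhds
    rw [zero_smul, add_zero, vecMulVec_mul, trace_vecMulVec, dotProduct_comm, ← dotProduct_mulVec]
  refine ge_of_tendsto hlim (eventually_nhdsWithin_of_forall fun ε (hε : 0 < ε) => h _ ?_)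
  exact PosDef.posSemidef_add (posSemidef_vecMulVec_self_star x) (PosDef.one.smul hε)

end Matrix

section MinRepr

variable {n : ℕ}

lemma hermCFC_eq_cfc (f : ℝ → ℝ) (A : Matrix (Fin n) (Fin n) ℂ) : hermCFC f A = cfc f A := by
  by_cases hA : A.IsHermitian
  · rw [hermCFC, dif_pos hA, hA.cfc_eq, IsHermitian.cfc, Unitary.conjStarAlgAut_apply]
    rfl
  · rw [hermCFC, dif_neg hA]
    exact (cfc_apply_of_not_predicate A hA).symm

lemma invSqrtMat_mul_cfc_sqrt {S : Matrix (Fin n) (Fin n) ℂ} (hS : S.PosDef) :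
    invSqrtMat S * cfc Real.sqrt S = 1 := by
  rw [invSqrtMat, hermCFC_eq_cfc, ← cfc_mul _ _ S (finite_real_spectrum.continuousOn _)
    (finite_real_spectrum.continuousOn _), ← cfc_one ℝ S hS.1]
  refine cfc_congr fun x hx => ?_
  have hx : 0 < x := by
    obtain ⟨i, rfl⟩ := hS.1.spectrum_real_eq_range_eigenvalues ▸ hx
    exact hS.eigenvalues_pos i
  simp [hx.ne', Real.sqrt_ne_zero'.2 hx]

lemma cqApply_append {m₁ m₂ : ℕ} (ρ₁ : Fin m₁ → Matrix (Fin n) (Fin n) ℂ)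
    (ρ₂ : Fin m₂ → Matrix (Fin n) (Fin n) ℂ) (p₁ : Fin m₁ → ℝ) (p₂ : Fin m₂ → ℝ) :
    cqApply (Fin.append ρ₁ ρ₂) (Fin.append p₁ p₂) = cqApply ρ₁ p₁ + cqApply ρ₂ p₂ := by
  simp [cqApply, Fin.sum_univ_add]

lemma cqApply_smul {X : Type*} [Fintype X] (ρ : X → Matrix (Fin n) (Fin n) ℂ) (c : ℝ)
    (p : X → ℝ) : cqApply ρ (c • p) = c • cqApply ρ p := by
  simp [cqApply, Finset.smul_sum, mul_smul, Complex.coe_smul]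

def classicalReprValues (f : ℝ → ℝ) (σ0 σ1 : Matrix (Fin n) (Fin n) ℂ) : Set EReal :=
  { d | ∃ (m : ℕ) (q0 q1 : Fin m → ℝ) (ρ : Fin m → Matrix (Fin n) (Fin n) ℂ),
      (∀ x, 0 ≤ q0 x) ∧ (∀ x, 0 < q1 x) ∧ (∀ x, IsDensityMatrix (ρ x)) ∧
      cqApply ρ q0 = σ0 ∧ cqApply ρ q1 = σ1 ∧
      d = ((∑ x, q1 x * f (q0 x / q1 x) : ℝ) : EReal) }

variable {f : ℝ → ℝ} {σ0 σ1 τ0 τ1 : Matrix (Fin n) (Fin n) ℂ}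

lemma coe_convexComb_mem_classicalReprValues {t v w : ℝ} (ht0 : 0 < t) (ht1 : t < 1)
    (hv : (v : EReal) ∈ classicalReprValues f σ0 σ1)
    (hw : (w : EReal) ∈ classicalReprValues f τ0 τ1) :
    ((t * v + (1 - t) * w : ℝ) : EReal) ∈
      classicalReprValues f (t • σ0 + (1 - t) • τ0) (t • σ1 + (1 - t) • τ1) := by
  obtain ⟨m₁, p0, p1, ρ₁, hp0, hp1, hρ₁, hp0σ, hp1σ, hv⟩ := hv
  obtain ⟨m₂, q0, q1, ρ₂, hq0, hq1, hρ₂, hq0τ, hq1τ, hw⟩ := hw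
  have ht1' : 0 < 1 - t := sub_pos.2 ht1
  refine ⟨m₁ + m₂, Fin.append (t • p0) ((1 - t) • q0), Fin.append (t • p1) ((1 - t) • q1),
    Fin.append ρ₁ ρ₂, fun i => ?_, fun i => ?_, fun i => ?_, ?_, ?_, ?_⟩
  · cases i using Fin.addCases <;>
      simp only [Fin.append_left, Fin.append_right, Pi.smul_apply, smul_eq_mul]
    exacts [mul_nonneg ht0.le (hp0 _), mul_nonneg ht1'.le (hq0 _)]
  · cases i using Fin.addCases <;>
      simp only [Fin.append_left, Fin.append_right, Pi.smul_apply, smul_eq_mul]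
    exacts [mul_pos ht0 (hp1 _), mul_pos ht1' (hq1 _)]
  · cases i using Fin.addCases <;> simp only [Fin.append_left, Fin.append_right]
    exacts [hρ₁ _, hρ₂ _]
  · rw [cqApply_append, cqApply_smul, cqApply_smul, hp0σ, hq0τ]
  · rw [cqApply_append, cqApply_smul, cqApply_smul, hp1σ, hq1τ]
  · rw [EReal.coe_eq_coe_iff.1 hv, EReal.coe_eq_coe_iff.1 hw, Fin.sum_univ_add]
    simp only [Fin.append_left, Fin.append_right, Pi.smul_apply, smul_eq_mul,
      mul_div_mul_left _ _ ht0.ne', mul_div_mul_left _ _ ht1'.ne', Finset.mul_sum, mul_assoc]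

lemma exists_coe_mem_classicalReprValues_lt {r : ℝ}
    (h : sInf (classicalReprValues f σ0 σ1) < r) :
    ∃ v : ℝ, (v : EReal) ∈ classicalReprValues f σ0 σ1 ∧ v < r := by
  obtain ⟨d, hd, hdr⟩ := sInf_lt_iff.1 h
  obtain ⟨_, _, _, _, _, _, _, _, _, rfl⟩ := id hd
  exact ⟨_, hd, EReal.coe_lt_coe_iff.1 hdr⟩

lemma sInf_classicalReprValues_convexComb_le {t a b : ℝ} (ht0 : 0 < t) (ht1 : t < 1)
    (ha : sInf (classicalReprValues f σ0 σ1) = a) (hb : sInf (classicalReprValues f τ0 τ1) = b) :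
    sInf (classicalReprValues f (t • σ0 + (1 - t) • τ0) (t • σ1 + (1 - t) • τ1)) ≤
      ((t * a + (1 - t) * b : ℝ) : EReal) := by
  refine EReal.le_of_forall_lt_iff_le.1 fun z hz => ?_
  set ε := z - (t * a + (1 - t) * b)
  have hε : 0 < ε := sub_pos.2 (EReal.coe_lt_coe_iff.1 hz)
  obtain ⟨v, hv, hva⟩ := exists_coe_mem_classicalReprValues_lt
    (ha.trans_lt (EReal.coe_lt_coe_iff.2 (lt_add_of_pos_right a hε)))
  obtain ⟨w, hw, hwb⟩ := exists_coe_mem_classicalReprValues_lt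
    (hb.trans_lt (EReal.coe_lt_coe_iff.2 (lt_add_of_pos_right b hε)))
  refine sInf_le_of_le (coe_convexComb_mem_classicalReprValues ht0 ht1 hv hw)
    (EReal.coe_le_coe_iff.2 ?_)
  nlinarith

end MinRepr

def HasMinReprFormula (f : ℝ → ℝ) : Prop :=
  ∀ (n : ℕ) (σ0 σ1 : Matrix (Fin n) (Fin n) ℂ),
    σ0.PosSemidef → σ1.PosDef → 0 < σ0.trace.re → 0 < σ1.trace.re →
    sInf (classicalReprValues f σ0 σ1) =
      (((σ1 * hermCFC f (invSqrtMat σ1 * σ0 * invSqrtMat σ1)).trace.re : ℝ) : EReal)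

section TraceConvexity

variable {n : ℕ} {f : ℝ → ℝ} {t : ℝ} {S : Matrix (Fin n) (Fin n) ℂ}

theorem HasMinReprFormula.trace_mul_cfc_convexComb_le [Nonempty (Fin n)]
    (hrepr : HasMinReprFormula f) (hS : S.PosDef) {X Y : Matrix (Fin n) (Fin n) ℂ}
    (hX : X.PosDef) (hY : Y.PosDef) (ht0 : 0 < t) (ht1 : t < 1) :
    (S * cfc f (t • X + (1 - t) • Y)).trace.re ≤
      t * (S * cfc f X).trace.re + (1 - t) * (S * cfc f Y).trace.re := by
  set N := invSqrtMat S
  set M := cfc Real.sqrt S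
  have hNM : N * M = 1 := invSqrtMat_mul_cfc_sqrt hS
  have hMN : M * N = 1 := mul_eq_one_comm.1 hNM
  have hM : Mᴴ = M := cfc_predicate Real.sqrt S
  have hMinj : Function.Injective M.mulVec :=
    Function.LeftInverse.injective (g := N.mulVec) fun v => by rw [mulVec_mulVec, hNM, one_mulVec]
  -- with `M = S^{1/2}`, the formula at `σ0 = M Z M` reads `tr (S f(Z))`
  have hvalue : ∀ Z : Matrix (Fin n) (Fin n) ℂ, Z.PosDef →
      sInf (classicalReprValues f (M * Z * M) S) = (((S * cfc f Z).trace.re : ℝ) : EReal) := by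
    intro Z hZ
    have hMZM : (M * Z * M).PosDef := by
      simpa only [hM] using hZ.conjTranspose_mul_mul_same hMinj
    have hcancel : N * (M * Z * M) * N = Z := by
      simp only [← mul_assoc, hNM, one_mul]
      rw [mul_assoc, hMN, mul_one]
    rw [hrepr n _ S hMZM.posSemidef hS (RCLike.pos_iff.1 hMZM.trace_pos).1
      (RCLike.pos_iff.1 hS.trace_pos).1, hcancel, hermCFC_eq_cfc]
  have hsplit : M * (t • X + (1 - t) • Y) * M = t • (M * X * M) + (1 - t) • (M * Y * M) := by
    simp only [mul_add, add_mul, mul_smul_comm, smul_mul_assoc]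
  have hXY : (t • X + (1 - t) • Y).PosDef := (hX.smul ht0).add (hY.smul (sub_pos.2 ht1))
  have hconv := sInf_classicalReprValues_convexComb_le ht0 ht1 (hvalue X hX) (hvalue Y hY)
  rwa [← hsplit, Convex.combo_self (add_sub_cancel t 1), hvalue _ hXY, EReal.coe_le_coe_iff]
    at hconv

theorem HasMinReprFormula.trace_mul_cfc_convexComb_le_of_posSemidef [Nonempty (Fin n)]
    (hrepr : HasMinReprFormula f) (hf : ContinuousOn f (Set.Ici 0)) (hS : S.PosDef)
    {A B : Matrix (Fin n) (Fin n) ℂ} (hA : A.PosSemidef) (hB : B.PosSemidef)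
    (ht0 : 0 < t) (ht1 : t < 1) :
    (S * cfc f (t • A + (1 - t) • B)).trace.re ≤
      t * (S * cfc f A).trace.re + (1 - t) * (S * cfc f B).trace.re := by
  have hlim : ∀ X : Matrix (Fin n) (Fin n) ℂ, X.PosSemidef →
      Tendsto (fun δ : ℝ => (S * cfc f (X + δ • 1)).trace.re) (𝓝[>] 0)
        (𝓝 (S * cfc f X).trace.re) := fun X hX =>
    ((Complex.continuous_re.comp (continuous_id.matrix_trace.comp
      (continuous_const.matrix_mul continuous_id))).tendsto _).comp
      (hX.tendsto_cfc_add_smul_one hf)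
  have hC : (t • A + (1 - t) • B).PosSemidef := (hA.smul ht0.le).add (hB.smul (sub_pos.2 ht1).le)
  refine le_of_tendsto_of_tendsto (hlim _ hC)
    (((hlim A hA).const_mul t).add ((hlim B hB).const_mul (1 - t))) ?_
  filter_upwards [self_mem_nhdsWithin] with δ (hδ : 0 < δ)
  have hshift : t • A + (1 - t) • B + δ • 1 = t • (A + δ • 1) + (1 - t) • (B + δ • 1) := by
    module
  have hδ1 : (δ • 1 : Matrix (Fin n) (Fin n) ℂ).PosDef := PosDef.one.smul hδ
  rw [hshift]
  exact hrepr.trace_mul_cfc_convexComb_le hS (PosDef.posSemidef_add hA hδ1)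
    (PosDef.posSemidef_add hB hδ1) ht0 ht1

end TraceConvexity

/-- If for all positive definite `σ1` and positive semidefinite
`σ0` (of arbitrary positive traces) the minimal classical `f`-quantity over all
classical representations equals `tr σ1 f(σ1^{-1/2} σ0 σ1^{-1/2})`,
then `f` is operator convex. -/
theorem operatorConvex_of_min_repr_eq (f : ℝ → ℝ) (hf : ContinuousOn f (Set.Ici 0))
    (h : ∀ (n : ℕ) (σ0 σ1 : Matrix (Fin n) (Fin n) ℂ),
      σ0.PosSemidef → σ1.PosDef → 0 < σ0.trace.re → 0 < σ1.trace.re →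
      sInf { d : EReal |
        ∃ (m : ℕ) (q0 q1 : Fin m → ℝ) (ρ : Fin m → Matrix (Fin n) (Fin n) ℂ),
          (∀ x, 0 ≤ q0 x) ∧ (∀ x, 0 < q1 x) ∧ (∀ x, IsDensityMatrix (ρ x)) ∧
          cqApply ρ q0 = σ0 ∧ cqApply ρ q1 = σ1 ∧
          d = ((∑ x, q1 x * f (q0 x / q1 x) : ℝ) : EReal) } =
        (((σ1 * hermCFC f (invSqrtMat σ1 * σ0 * invSqrtMat σ1)).trace.re : ℝ) : EReal)) :
    OperatorConvex f := by
  intro n A B hA hB t ht0 ht1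
  simp only [hermCFC_eq_cfc]
  rcases isEmpty_or_nonempty (Fin n) with _ | _
  · convert PosSemidef.zero
    exact Subsingleton.elim _ _
  rcases ht0.eq_or_lt with rfl | ht0
  · simpa using PosSemidef.zero
  rcases ht1.eq_or_lt with rfl | ht1
  · simpa using PosSemidef.zero
  have hD : (t • cfc f A + (1 - t) • cfc f B - cfc f (t • A + (1 - t) • B)).IsHermitian :=
    (((IsSelfAdjoint.all t).smul (cfc_predicate f A)).add
      ((IsSelfAdjoint.all (1 - t)).smul (cfc_predicate f B))).sub (cfc_predicate _ _)
  refine posSemidef_of_forall_posDef_trace_mul_nonneg hD fun S hS => ?_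
  have hconv := HasMinReprFormula.trace_mul_cfc_convexComb_le_of_posSemidef h hf hS hA hB ht0 ht1
  simp only [mul_sub, mul_add, mul_smul_comm, trace_sub, trace_add, trace_smul,
    RCLike.re_to_complex, Complex.sub_re, Complex.add_re, Complex.real_smul, Complex.re_ofReal_mul]
  linarith
end

section
/- There exist probability vectors p and q on a three-element set X such that, with u the uniform probability vector on X, the inequality Σ_{x∈X} u(x)·f(p(x)/u(x)) ≥ Σ_{x∈X} u(x)·f(q(x)/u(x)) holds for every operator convex continuous function f : [0,∞) → ℝ, and yet there is no stochastic matrix P from X to X with Pp = q and Pu = u. -/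
open Matrix
open scoped Kronecker ComplexOrder

/-!
A stochastic matrix fixing the uniform vector has rows summing to one, so `P p` only averages
the entries of `p`: `(P p) 0 ≤ max p = 31/60 < 8/15 = q 0` for `p = (31/60, 29/60, 0)` and
`q = (8/15, 7/30, 7/30)`.

With `p/u = (31/20, 29/20, 0)` and `q/u = (8/5, 7/10, 7/10)` the divergence inequality reads
`f(8/5) + 2 f(7/10) ≤ f(31/20) + f(29/20) + f(0)`, which fails for some convex `f`
(e.g. `(x - 31/20)₊`). For operator convex `f`, test operator convexity at the midpoint of
`X = diag(5/4, 0)` and a matrix `Y` with eigenvalues `5/2, 5/4` against `v = (3, 4)`, an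
eigenvector of `Y`: this gives `45/2 f(3/4) + 5/2 f(7/4) ≤ 17 f(5/4) + 8 f(0)`, and ordinary
convexity at five points turns it into the claim. All functional calculi involved are explicit,
since on a Hermitian matrix with two eigenvalues `a ≠ b` any `f` acts as the affine function
interpolating it at `a` and `b`.
-/

section HermCFC

variable {n : ℕ} {A : Matrix (Fin n) (Fin n) ℂ}

theorem hermCFC_eq_of_affine_on_eigenvalues (f : ℝ → ℝ) (hA : A.IsHermitian) (α β : ℝ)
    (h : ∀ i, f (hA.eigenvalues i) = α * hA.eigenvalues i + β) :
    hermCFC f A = (α : ℂ) • A + (β : ℂ) • 1 := by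
  set U : Matrix (Fin n) (Fin n) ℂ := (hA.eigenvectorUnitary : Matrix (Fin n) (Fin n) ℂ)
  have hdiag : diagonal (fun i => (f (hA.eigenvalues i) : ℂ))
      = (α : ℂ) • diagonal (RCLike.ofReal ∘ hA.eigenvalues) + (β : ℂ) • 1 := by
    ext i j
    by_cases hij : i = j
    · subst hij; simp [h]
    · simp [hij]
  have hU : U * star U = 1 := Unitary.coe_mul_star_self hA.eigenvectorUnitary
  rw [hermCFC, dif_pos hA, hdiag]
  conv_rhs => rw [hA.spectral_theorem, Unitary.conjStarAlgAut_apply]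
  rw [Matrix.mul_add, Matrix.add_mul, Matrix.mul_smul, Matrix.smul_mul, Matrix.mul_smul,
    Matrix.smul_mul, Matrix.mul_one, hU]

theorem Matrix.IsHermitian.eigenvalues_eq_or_eq (hA : A.IsHermitian) {a b : ℝ}
    (h : (A - (a : ℂ) • 1) * (A - (b : ℂ) • 1) = 0) (i : Fin n) :
    hA.eigenvalues i = a ∨ hA.eigenvalues i = b := by
  set v := ⇑(hA.eigenvectorBasis i)
  have hv : v ≠ 0 := fun hv0 =>
    hA.eigenvectorBasis.orthonormal.ne_zero i (by ext j; exact congrFun hv0 j)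
  have hAv : A *ᵥ v = (hA.eigenvalues i : ℂ) • v := by
    rw [hA.mulVec_eigenvectorBasis, RCLike.real_smul_eq_coe_smul (K := ℂ)]; rfl
  have hprod : (((hA.eigenvalues i - a) * (hA.eigenvalues i - b) : ℝ) : ℂ) • v = 0 := by
    rw [← zero_mulVec v, ← h, ← mulVec_mulVec]
    simp only [sub_mulVec, smul_mulVec, one_mulVec, mulVec_smul, hAv, ← sub_smul, smul_smul]
    push_cast; ring_nf
  rcases smul_eq_zero.mp hprod with h0 | h0
  · rcases mul_eq_zero.mp (Complex.ofReal_eq_zero.mp h0) with h1 | h1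
    · exact Or.inl (sub_eq_zero.mp h1)
    · exact Or.inr (sub_eq_zero.mp h1)
  · exact absurd h0 hv

theorem hermCFC_eq_of_mul_eq_zero (f : ℝ → ℝ) (hA : A.IsHermitian) {a b : ℝ} (hab : a ≠ b)
    (h : (A - (a : ℂ) • 1) * (A - (b : ℂ) • 1) = 0) :
    hermCFC f A = (((f a - f b) / (a - b) : ℝ) : ℂ) • A
      + (((a * f b - b * f a) / (a - b) : ℝ) : ℂ) • 1 := by
  have hab' : a - b ≠ 0 := sub_ne_zero.mpr hab
  refine hermCFC_eq_of_affine_on_eigenvalues f hA _ _ fun i => ?_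
  rcases hA.eigenvalues_eq_or_eq h i with hi | hi <;> rw [hi] <;> field_simp <;> ring

theorem hermCFC_smul_one (f : ℝ → ℝ) (z : ℝ) :
    hermCFC f ((z : ℂ) • (1 : Matrix (Fin n) (Fin n) ℂ)) = (f z : ℂ) • 1 := by
  have hA : ((z : ℂ) • (1 : Matrix (Fin n) (Fin n) ℂ)).IsHermitian := by
    simp [IsHermitian, conjTranspose_smul]
  have hz : ∀ i, hA.eigenvalues i = z := fun i =>
    (hA.eigenvalues_eq_or_eq (a := z) (b := z) (by simp) i).elim id id
  simpa using hermCFC_eq_of_affine_on_eigenvalues f hA 0 (f z) fun i => by simp [hz]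

theorem Matrix.IsHermitian.posSemidef_of_mul_eq_zero (hA : A.IsHermitian) {a b : ℝ}
    (ha : 0 ≤ a) (hb : 0 ≤ b) (h : (A - (a : ℂ) • 1) * (A - (b : ℂ) • 1) = 0) :
    A.PosSemidef :=
  hA.posSemidef_iff_eigenvalues_nonneg.mpr fun i => by
    rcases hA.eigenvalues_eq_or_eq h i with hi | hi <;> simp [hi, ha, hb]

end HermCFC

theorem OperatorConvex.convexOn {f : ℝ → ℝ} (hf : OperatorConvex f) :
    ConvexOn ℝ (Set.Ici 0) f := by
  refine ⟨convex_Ici 0, fun x hx y hy s t hs ht hst => ?_⟩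
  have hpsd : ∀ z : ℝ, 0 ≤ z → ((z : ℂ) • (1 : Matrix (Fin 1) (Fin 1) ℂ)).PosSemidef :=
    fun z hz => PosSemidef.one.smul (Complex.zero_le_real.mpr hz)
  have key := hf 1 _ _ (hpsd x hx) (hpsd y hy) s hs (by linarith)
  rw [← eq_sub_of_add_eq' hst] at key
  have hmix : s • ((x : ℂ) • (1 : Matrix (Fin 1) (Fin 1) ℂ)) + t • ((y : ℂ) • 1)
      = ((s • x + t • y : ℝ) : ℂ) • 1 := by
    rw [← smul_assoc, ← smul_assoc, ← add_smul]
    simp [Complex.real_smul]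
  rw [hmix, hermCFC_smul_one, hermCFC_smul_one, hermCFC_smul_one] at key
  have h00 := key.diag_nonneg (i := 0)
  simp only [Matrix.sub_apply, Matrix.add_apply, Matrix.smul_apply, one_apply_eq, smul_eq_mul,
    Complex.real_smul, mul_one] at h00 ⊢
  norm_cast at h00
  linarith

theorem OperatorConvex.two_by_two_midpoint_ineq {f : ℝ → ℝ} (hf : OperatorConvex f) :
    (45 / 2) * f (3 / 4) + (5 / 2) * f (7 / 4) ≤ 17 * f (5 / 4) + 8 * f 0 := by
  let X : Matrix (Fin 2) (Fin 2) ℂ := !![5 / 4, 0; 0, 0]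
  let Y : Matrix (Fin 2) (Fin 2) ℂ := !![41 / 20, -3 / 5; -3 / 5, 17 / 10]
  let C : Matrix (Fin 2) (Fin 2) ℂ := !![33 / 20, -3 / 10; -3 / 10, 17 / 20]
  have hXH : X.IsHermitian := by
    ext i j; fin_cases i <;> fin_cases j <;> simp [X]
  have hYH : Y.IsHermitian := by
    ext i j; fin_cases i <;> fin_cases j <;> simp [Y]
  have hCH : C.IsHermitian := by
    ext i j; fin_cases i <;> fin_cases j <;> simp [C]
  have hX : (X - ((5 / 4 : ℝ) : ℂ) • 1) * (X - ((0 : ℝ) : ℂ) • 1) = 0 := by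
    ext i j; fin_cases i <;> fin_cases j <;> simp [X, mul_apply, Fin.sum_univ_two]
  have hY : (Y - ((5 / 2 : ℝ) : ℂ) • 1) * (Y - ((5 / 4 : ℝ) : ℂ) • 1) = 0 := by
    ext i j; fin_cases i <;> fin_cases j <;> simp [Y, mul_apply, Fin.sum_univ_two] <;> norm_num
  have hC : (C - ((3 / 4 : ℝ) : ℂ) • 1) * (C - ((7 / 4 : ℝ) : ℂ) • 1) = 0 := by
    ext i j; fin_cases i <;> fin_cases j <;> simp [C, mul_apply, Fin.sum_univ_two] <;> norm_num
  have hmid : (1 / 2 : ℝ) • X + (1 - 1 / 2 : ℝ) • Y = C := by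
    ext i j; fin_cases i <;> fin_cases j <;> simp [X, Y, C, Complex.real_smul] <;> norm_num
  have key := hf 2 X Y (hXH.posSemidef_of_mul_eq_zero (by norm_num) le_rfl hX)
    (hYH.posSemidef_of_mul_eq_zero (by norm_num) (by norm_num) hY) (1 / 2) (by norm_num)
    (by norm_num)
  rw [hmid, hermCFC_eq_of_mul_eq_zero f hXH (by norm_num) hX,
    hermCFC_eq_of_mul_eq_zero f hYH (by norm_num) hY,
    hermCFC_eq_of_mul_eq_zero f hCH (by norm_num) hC] at key
  -- `(3, 4)` is an eigenvector of `Y` for `5/4`, so `f (5/2)` drops out of the quadratic form.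
  have hv := key.re_dotProduct_nonneg ![3, 4]
  norm_num [X, Y, C, dotProduct, mulVec, Fin.sum_univ_two, Complex.real_smul,
    -Complex.ofReal_div, -Complex.ofReal_sub, -Complex.ofReal_mul] at hv
  linarith

theorem OperatorConvex.counterexample_ineq {f : ℝ → ℝ} (hf : OperatorConvex f) :
    f (8 / 5) + 2 * f (7 / 10) ≤ f (31 / 20) + f (29 / 20) + f 0 := by
  have step : ∀ {x y a z : ℝ}, 0 ≤ x → 0 ≤ y → 0 ≤ a → a ≤ 1 → a * x + (1 - a) * y = z →
      f z ≤ a * f x + (1 - a) * f y := fun hx hy ha0 ha1 hz =>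
    hz ▸ hf.convexOn.2 hx hy ha0 (sub_nonneg.mpr ha1) (add_sub_cancel _ _)
  have h1 := step (x := 0) (y := 3 / 4) (a := 1 / 15) (z := 7 / 10)
    le_rfl (by norm_num) (by norm_num) (by norm_num) (by norm_num)
  have h2 := step (x := 31 / 20) (y := 7 / 4) (a := 3 / 4) (z := 8 / 5)
    (by norm_num) (by norm_num) (by norm_num) (by norm_num) (by norm_num)
  have h3 := step (x := 0) (y := 3 / 4) (a := 4 / 27) (z := 23 / 36)
    le_rfl (by norm_num) (by norm_num) (by norm_num) (by norm_num)
  have h4 := step (x := 29 / 20) (y := 31 / 20) (a := 4 / 5) (z := 147 / 100)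
    (by norm_num) (by norm_num) (by norm_num) (by norm_num) (by norm_num)
  have h5 := step (x := 23 / 36) (y := 147 / 100) (a := 9 / 34) (z := 5 / 4)
    (by norm_num) (by norm_num) (by norm_num) (by norm_num) (by norm_num)
  linarith [hf.two_by_two_midpoint_ineq]

theorem stocApply_le_of_forall_le {X Y : Type*} [Fintype X] [Fintype Y]
    {P : Y → X → ℝ} (hP : ∀ y x, 0 ≤ P y x) {c : ℝ} (hc : c ≠ 0)
    (hPc : stocApply P (fun _ => c) = fun _ => c) {p : X → ℝ} {M : ℝ} (hp : ∀ x, p x ≤ M)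
    (y : Y) : stocApply P p y ≤ M := by
  have hrow : ∑ x, P y x = 1 := by
    have hy := congrFun hPc y
    simp only [stocApply, ← Finset.sum_mul] at hy
    exact (mul_eq_right₀ hc).mp hy
  calc stocApply P p y = ∑ x, P y x * p x := rfl
    _ ≤ ∑ x, P y x * M := Finset.sum_le_sum fun x _ => mul_le_mul_of_nonneg_left (hp x) (hP y x)
    _ = M := by rw [← Finset.sum_mul, hrow, one_mul]

/-- There are probability vectors `p`, `q` on a three-point set
such that all operator convex `f`-divergences with respect to the uniform
distribution `u` are monotone from `(p,u)` to `(q,u)`, yet no stochastic matrix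
maps `p ↦ q` and `u ↦ u`. -/
theorem operatorConvex_divergences_not_sufficient :
    ∃ p q : Fin 3 → ℝ, ProbVec p ∧ ProbVec q ∧
      (∀ f : ℝ → ℝ, ContinuousOn f (Set.Ici 0) → OperatorConvex f →
        ∑ x, (1 / 3 : ℝ) * f (q x / (1 / 3)) ≤
          ∑ x, (1 / 3 : ℝ) * f (p x / (1 / 3))) ∧
      ¬ ∃ P : Fin 3 → Fin 3 → ℝ, IsStochastic P ∧ stocApply P p = q ∧
          stocApply P (fun _ => (1 / 3 : ℝ)) = fun _ => (1 / 3 : ℝ) := by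
  refine ⟨![31 / 60, 29 / 60, 0], ![8 / 15, 7 / 30, 7 / 30], ?_, ?_, ?_, ?_⟩
  · exact ⟨fun x => by fin_cases x <;> norm_num,
      by norm_num [Fin.sum_univ_three, cons_val_two, tail_cons, head_cons]⟩
  · exact ⟨fun x => by fin_cases x <;> norm_num,
      by norm_num [Fin.sum_univ_three, cons_val_two, tail_cons, head_cons]⟩
  · intro f _ hf
    norm_num [Fin.sum_univ_three, cons_val_two, tail_cons, head_cons]
    linarith [hf.counterexample_ineq]
  · rintro ⟨P, ⟨hP, -⟩, hPp, hPu⟩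
    have h0 := stocApply_le_of_forall_le hP (by norm_num) hPu
      (p := ![31 / 60, 29 / 60, 0]) (M := 31 / 60) (fun x => by fin_cases x <;> norm_num) 0
    rw [hPp] at h0
    norm_num at h0
end

section
/- Let ψ ∈ ℂ^n be a unit vector, σ1 := ψψ* (a pure state), σ0 an n×n density matrix, and p0, p1 probability vectors on a finite set X. A classical-to-quantum channel Γ with Γ(p0) = σ0 and Γ(p1) = σ1 exists if and only if the matrix σ0 − (Σ_{x : p1(x)>0} p0(x))·σ1 is positive semidefinite. -/
open Matrix
open scoped Kronecker ComplexOrder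

/-! A pure state `σ1 = ψψ*` is an extreme point of the density matrices, so every `ρ x` with
`p1 x > 0` equals `σ1`; hence `σ0 - c • σ1 = Σ_{p1 x = 0} p0 x • ρ x` is positive semidefinite,
where `c = Σ_{p1 x > 0} p0 x`. Conversely, send every `x` with `p1 x > 0` to `σ1` and every other
`x` to `σ0 - c • σ1` normalised to trace one (to any state if it vanishes). -/

namespace Matrix

variable {m 𝕜 : Type*} [Fintype m] [RCLike 𝕜]

/- `ρ` kills `ψ^⊥`, so `ρ = ρP = Pρ` for the projection `P = ψψ*`; thus `ρ = PρP` is a multiple of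
`P`, and the trace fixes the multiple. -/
theorem IsHermitian.eq_vecMulVec_star_of_mulVec_eq_zero {ψ : m → 𝕜} (hψ : star ψ ⬝ᵥ ψ = 1)
    {ρ : Matrix m m 𝕜} (hρ : ρ.IsHermitian) (htr : ρ.trace = 1)
    (h : ∀ w, star ψ ⬝ᵥ w = 0 → ρ *ᵥ w = 0) : ρ = vecMulVec ψ (star ψ) := by
  set P := vecMulVec ψ (star ψ)
  have hP : P.IsHermitian := (posSemidef_vecMulVec_self_star ψ).isHermitian
  have hρP : ρ * P = ρ := by
    refine ext_iff_mulVec.mpr fun v => ?_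
    have hv : star ψ ⬝ᵥ (v - P *ᵥ v) = 0 := by
      simp [P, vecMulVec_mulVec, dotProduct_sub, hψ]
    rw [← mulVec_mulVec, eq_comm, ← sub_eq_zero, ← mulVec_sub, h _ hv]
  have hPρ : P * ρ = ρ := by
    simpa [conjTranspose_mul, hP.eq, hρ.eq] using congrArg Matrix.conjTranspose hρP
  have hsmul : ρ = (star ψ ⬝ᵥ ρ *ᵥ ψ) • P := by
    calc ρ = P * ρ * P := by rw [hPρ, hρP]
      _ = _ := by rw [vecMulVec_mul, vecMulVec_mul_vecMulVec, vecMulVec_smul, dotProduct_mulVec]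
  have hc : star ψ ⬝ᵥ ρ *ᵥ ψ = 1 := by
    simpa [P, trace_vecMulVec, dotProduct_comm ψ, hψ] using (congrArg trace hsmul).symm.trans htr
  rw [hsmul, hc, one_smul]

end Matrix

section CQChannel

variable {X : Type*} [Fintype X] {n : ℕ}

theorem isDensityMatrix_vecMulVec_star {ψ : Fin n → ℂ} (hψ : star ψ ⬝ᵥ ψ = 1) :
    IsDensityMatrix (vecMulVec ψ (star ψ)) :=
  ⟨posSemidef_vecMulVec_self_star ψ, by rw [trace_vecMulVec, dotProduct_comm, hψ]⟩

theorem exists_isDensityMatrix_trace_smul_eq {A D : Matrix (Fin n) (Fin n) ℂ}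
    (hA : A.PosSemidef) (hD : IsDensityMatrix D) :
    ∃ ρ, IsDensityMatrix ρ ∧ A.trace • ρ = A := by
  by_cases h0 : A.trace = 0
  · exact ⟨D, hD, by simp [hA.trace_eq_zero_iff.mp h0]⟩
  · refine ⟨A.trace⁻¹ • A, ⟨hA.smul (inv_nonneg.mpr hA.trace_nonneg), ?_⟩, ?_⟩
    · rw [trace_smul, smul_eq_mul, inv_mul_cancel₀ h0]
    · rw [smul_smul, mul_inv_cancel₀ h0, one_smul]

theorem posSemidef_cqApply {ρ : X → Matrix (Fin n) (Fin n) ℂ} {p : X → ℝ}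
    (hρ : ∀ x, (ρ x).PosSemidef) (hp : ∀ x, 0 ≤ p x) : (cqApply ρ p).PosSemidef :=
  posSemidef_sum _ fun x _ => (hρ x).smul (by exact_mod_cast hp x)

theorem mulVec_eq_zero_of_cqApply_mulVec_eq_zero {ρ : X → Matrix (Fin n) (Fin n) ℂ}
    {p : X → ℝ} (hρ : ∀ x, (ρ x).PosSemidef) (hp : ∀ x, 0 ≤ p x) {w : Fin n → ℂ}
    (hw : cqApply ρ p *ᵥ w = 0) {x : X} (hx : 0 < p x) : ρ x *ᵥ w = 0 := by
  have hsum : ∑ y, (p y : ℂ) * (star w ⬝ᵥ ρ y *ᵥ w) = 0 := by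
    simpa [cqApply, sum_mulVec, dotProduct_sum, smul_mulVec, dotProduct_smul]
      using congrArg (star w ⬝ᵥ ·) hw
  have hterm := (Finset.sum_eq_zero_iff_of_nonneg fun y _ =>
    mul_nonneg (by exact_mod_cast hp y) ((hρ y).dotProduct_mulVec_nonneg w)).mp hsum x
    (Finset.mem_univ x)
  rw [← (hρ x).dotProduct_mulVec_zero_iff]
  exact (mul_eq_zero.mp hterm).resolve_left (by exact_mod_cast hx.ne')

theorem cqApply_congr {ρ ρ' : X → Matrix (Fin n) (Fin n) ℂ} {p : X → ℝ}
    (h : ∀ x, p x ≠ 0 → ρ x = ρ' x) : cqApply ρ p = cqApply ρ' p :=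
  Finset.sum_congr rfl fun x _ => by by_cases hx : p x = 0 <;> simp [hx, h]

theorem cqApply_const (σ : Matrix (Fin n) (Fin n) ℂ) (p : X → ℝ) :
    cqApply (fun _ => σ) p = ((∑ x, p x : ℝ) : ℂ) • σ := by
  simp [cqApply, Finset.sum_smul]

theorem cqApply_eq_smul_add_cqApply (P : X → Prop) [DecidablePred P]
    {ρ : X → Matrix (Fin n) (Fin n) ℂ} {σ : Matrix (Fin n) (Fin n) ℂ}
    (hρ : ∀ x, P x → ρ x = σ) (p : X → ℝ) :
    cqApply ρ p = ((∑ x, if P x then p x else 0 : ℝ) : ℂ) • σ +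
      cqApply ρ (fun x => if P x then 0 else p x) := by
  simp only [cqApply, Complex.ofReal_sum, Finset.sum_smul, ← Finset.sum_add_distrib]
  refine Finset.sum_congr rfl fun x _ => ?_
  by_cases hx : P x <;> simp [hx, hρ]

end CQChannel

/-- For a pure target state `σ1 = ψψ*`, a classical-to-quantum
channel `Γ` with `Γ(p0) = σ0`, `Γ(p1) = σ1` exists iff
`σ0 − (Σ_{x : p1(x)>0} p0(x)) σ1` is positive semidefinite. -/
theorem cq_channel_exists_iff_posSemidef {n : ℕ} {X : Type*} [Fintype X]
    (ψ : Fin n → ℂ) (hψ : star ψ ⬝ᵥ ψ = 1)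
    (σ0 : Matrix (Fin n) (Fin n) ℂ) (hσ0 : IsDensityMatrix σ0)
    (p0 p1 : X → ℝ) (hp0 : ProbVec p0) (hp1 : ProbVec p1) :
    (∃ ρ : X → Matrix (Fin n) (Fin n) ℂ, (∀ x, IsDensityMatrix (ρ x)) ∧
        cqApply ρ p0 = σ0 ∧ cqApply ρ p1 = vecMulVec ψ (star ψ)) ↔
      (σ0 - ((∑ x, if 0 < p1 x then p0 x else 0 : ℝ) : ℂ) •
        vecMulVec ψ (star ψ)).PosSemidef := by
  set σ1 := vecMulVec ψ (star ψ)
  set c : ℝ := ∑ x, if 0 < p1 x then p0 x else 0 with hc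
  have hσ1 : IsDensityMatrix σ1 := isDensityMatrix_vecMulVec_star hψ
  constructor
  · rintro ⟨ρ, hρ, h0, h1⟩
    have hpure : ∀ x, 0 < p1 x → ρ x = σ1 := fun x hx =>
      (hρ x).1.isHermitian.eq_vecMulVec_star_of_mulVec_eq_zero hψ (hρ x).2 fun w hw =>
        mulVec_eq_zero_of_cqApply_mulVec_eq_zero (fun y => (hρ y).1) hp1.1
          (by simp [h1, σ1, vecMulVec_mulVec, hw]) hx
    rw [← h0, cqApply_eq_smul_add_cqApply _ hpure, add_sub_cancel_left]
    exact posSemidef_cqApply (fun x => (hρ x).1) fun x => by split_ifs; exacts [le_rfl, hp0.1 x]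
  · intro hA
    obtain ⟨ρ', hρ', hAρ'⟩ := exists_isDensityMatrix_trace_smul_eq hA hσ1
    have hrest : (∑ x, if 0 < p1 x then 0 else p0 x : ℝ) = 1 - c := by
      rw [← hp0.2, hc, ← Finset.sum_sub_distrib]
      exact Finset.sum_congr rfl fun x _ => by split_ifs <;> ring
    have htrA : (σ0 - (c : ℂ) • σ1).trace = ((1 - c : ℝ) : ℂ) := by
      rw [trace_sub, trace_smul, hσ0.2, hσ1.2, smul_eq_mul]
      push_cast
      ring
    refine ⟨fun x => if 0 < p1 x then σ1 else ρ',
      fun x => by dsimp only; split_ifs; exacts [hσ1, hρ'], ?_, ?_⟩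
    · rw [cqApply_eq_smul_add_cqApply (fun x => 0 < p1 x) (fun x hx => if_pos hx),
        cqApply_congr (ρ' := fun _ => ρ') (fun x hx => if_neg fun h => hx (if_pos h)),
        cqApply_const, hrest, ← htrA, hAρ', add_sub_cancel]
    · rw [cqApply_congr (ρ' := fun _ => σ1) (fun x hx => if_pos ((hp1.1 x).lt_of_ne' hx)),
        cqApply_const, hp1.2, Complex.ofReal_one, one_smul]
end

section
/- Let p0, p1 be probability vectors on a finite set X and q0, q1 probability vectors on a finite set Y. There exists a stochastic matrix P from X to Y with Pp0 = q0 and Pp1 = q1 if and only if D_f(p0‖p1) ≥ D_f(q0‖q1) holds for every convex continuous function f : [0,∞) → ℝ. -/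
open Matrix
open scoped Kronecker ComplexOrder

/-!
Both directions go through the perspective `g(s, t) = t f(s/t)` of `f`, closed at `t = 0` by
`g(s, 0) = s L(f)`, so that `D_f(p₀‖p₁) = ∑ₓ g(p₀ x, p₁ x)`. For convex `f` the perspective is
positively homogeneous and subadditive, which is the data processing inequality.

Conversely, if `(q₀, q₁)` is not of the form `(P p₀, P p₁)`, separate it from this compact convex
set by a functional `(r, s) ↦ ∑ᵧ (a_y r_y + b_y s_y)`. The convex function
`f(t) = maxᵧ (a_y t + b_y)` has `D_f(p₀‖p₁) = ∑ₓ maxᵧ (a_y p₀ x + b_y p₁ x)`; this value is the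
functional at `(P p₀, P p₁)` for a deterministic `P` choosing a maximising `y` for each `x`, hence
lies below the functional at `(q₀, q₁)`, which in turn is at most `D_f(q₀‖q₁)`.
-/

open Filter Finset Topology

namespace EReal

lemma coe_finsetSum {ι : Type*} (s : Finset ι) (c : ι → ℝ) :
    ((∑ i ∈ s, c i : ℝ) : EReal) = ∑ i ∈ s, (c i : EReal) :=
  map_sum (⟨⟨Real.toEReal, coe_zero⟩, coe_add⟩ : ℝ →+ EReal) c s

lemma finsetSum_coe_mul_of_nonneg {ι : Type*} {s : Finset ι} {c : ι → ℝ}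
    (hc : ∀ i ∈ s, 0 ≤ c i) (L : EReal) :
    ∑ i ∈ s, (c i : EReal) * L = ((∑ i ∈ s, c i : ℝ) : EReal) * L := by
  classical
  induction s using Finset.induction_on with
  | empty => simp
  | insert i s hi ih =>
    have hs : ∀ j ∈ s, 0 ≤ c j := fun j hj => hc j (mem_insert_of_mem hj)
    rw [sum_insert hi, sum_insert hi, coe_add, ih hs,
      right_distrib_of_nonneg (EReal.coe_nonneg.2 (hc i (mem_insert_self i s)))
        (EReal.coe_nonneg.2 (sum_nonneg hs))]

end EReal

lemma recessionSlope_eq_of_tendsto {f : ℝ → ℝ} {l : ℝ}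
    (h : Tendsto (fun lam => f lam / lam) atTop (𝓝 l)) : recessionSlope f = l :=
  ((continuous_coe_real_ereal.tendsto l).comp h).limsup_eq

lemma ConvexOn.slope_le_recessionSlope {f : ℝ → ℝ} (hf : ConvexOn ℝ (Set.Ici 0) f)
    {z h : ℝ} (hz : 0 ≤ z) (hh : 0 < h) :
    (((f (z + h) - f z) / h : ℝ) : EReal) ≤ recessionSlope f := by
  set c := (f (z + h) - f z) / h
  have hlower : ∀ lam, z + h ≤ lam → c + (f z - z * c) / lam ≤ f lam / lam := by
    intro lam hlam
    have hsec : c ≤ (f lam - f z) / (lam - z) := by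
      simpa [c] using hf.secant_mono (a := z) (x := z + h) (y := lam) hz (by simp; linarith)
        (by simp; linarith) (by linarith) (by linarith) hlam
    rw [le_div_iff₀ (by linarith)] at hsec
    rw [← sub_nonneg]
    have : f lam / lam - (c + (f z - z * c) / lam) = (f lam - f z - c * (lam - z)) / lam := by
      field_simp [show lam ≠ 0 by linarith]
      ring
    rw [this]
    exact div_nonneg (by linarith) (by linarith)
  have hreal : Tendsto (fun lam : ℝ => c + (f z - z * c) / lam) atTop (𝓝 c) := by
    simpa using tendsto_const_nhds.add (tendsto_const_nhds.div_atTop (tendsto_id (α := ℝ)))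
  have htends :
      Tendsto (fun lam : ℝ => ((c + (f z - z * c) / lam : ℝ) : EReal)) atTop (𝓝 c) :=
    (continuous_coe_real_ereal.tendsto c).comp hreal
  rw [← htends.limsup_eq]
  exact limsup_le_limsup <| (eventually_ge_atTop (z + h)).mono fun lam hlam =>
    EReal.coe_le_coe_iff.2 (hlower lam hlam)

lemma ConvexOn.real_perspective_add_le {f : ℝ → ℝ} (hf : ConvexOn ℝ (Set.Ici 0) f)
    {s₁ s₂ t₁ t₂ : ℝ} (hs₁ : 0 ≤ s₁) (hs₂ : 0 ≤ s₂) (ht₁ : 0 < t₁) (ht₂ : 0 < t₂) :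
    (t₁ + t₂) * f ((s₁ + s₂) / (t₁ + t₂)) ≤ t₁ * f (s₁ / t₁) + t₂ * f (s₂ / t₂) := by
  have ht := add_pos ht₁ ht₂
  have hconv := hf.2 (x := s₁ / t₁) (y := s₂ / t₂) (div_nonneg hs₁ ht₁.le)
    (div_nonneg hs₂ ht₂.le) (div_nonneg ht₁.le ht.le) (div_nonneg ht₂.le ht.le)
    (by rw [← add_div, div_self ht.ne'])
  have hmid : (t₁ / (t₁ + t₂)) • (s₁ / t₁) + (t₂ / (t₁ + t₂)) • (s₂ / t₂)
      = (s₁ + s₂) / (t₁ + t₂) := by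
    simp only [smul_eq_mul]
    field_simp
  rw [hmid, smul_eq_mul, smul_eq_mul] at hconv
  calc (t₁ + t₂) * f ((s₁ + s₂) / (t₁ + t₂))
      ≤ (t₁ + t₂) * (t₁ / (t₁ + t₂) * f (s₁ / t₁) + t₂ / (t₁ + t₂) * f (s₂ / t₂)) :=
        mul_le_mul_of_nonneg_left hconv ht.le
    _ = t₁ * f (s₁ / t₁) + t₂ * f (s₂ / t₂) := by field_simp

noncomputable def perspective (f : ℝ → ℝ) (s t : ℝ) : EReal :=
  if 0 < t then ((t * f (s / t) : ℝ) : EReal) else (s : EReal) * recessionSlope f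

lemma fDiv_eq_sum_perspective {X : Type*} [Fintype X] (f : ℝ → ℝ) {p0 : X → ℝ}
    (hp0 : ∀ x, 0 ≤ p0 x) (p1 : X → ℝ) :
    fDiv f p0 p1 = ∑ x, perspective f (p0 x) (p1 x) := by
  have hterm : ∀ x, perspective f (p0 x) (p1 x) =
      ((if 0 < p1 x then p1 x * f (p0 x / p1 x) else 0 : ℝ) : EReal)
        + ((if 0 < p1 x then 0 else p0 x : ℝ) : EReal) * recessionSlope f := by
    intro x
    by_cases h : 0 < p1 x <;> simp [perspective, h]
  rw [fDiv, sum_congr rfl fun x _ => hterm x, sum_add_distrib, EReal.coe_finsetSum,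
    EReal.finsetSum_coe_mul_of_nonneg fun x _ => by split_ifs <;> simp [hp0 x]]

lemma perspective_mul (f : ℝ → ℝ) {c : ℝ} (hc : 0 ≤ c) (s t : ℝ) :
    perspective f (c * s) (c * t) = c * perspective f s t := by
  rcases hc.eq_or_lt with rfl | hc
  · simp [perspective]
  by_cases ht : 0 < t
  · simp only [perspective, ht, mul_pos hc ht, if_true, ← EReal.coe_mul]
    rw [mul_div_mul_left s t hc.ne']
    ring_nf
  · simp only [perspective, ht, if_false, (mul_pos_iff_of_pos_left hc).not.2 ht,
      EReal.coe_mul, mul_assoc]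

lemma perspective_add_left_le {f : ℝ → ℝ} (hf : ConvexOn ℝ (Set.Ici 0) f) {s d t : ℝ}
    (hs : 0 ≤ s) (hd : 0 ≤ d) (ht : 0 < t) :
    perspective f (s + d) t ≤ perspective f s t + perspective f d 0 := by
  simp only [perspective, ht, if_true, lt_irrefl, if_false]
  rcases hd.eq_or_lt with rfl | hd
  · simp
  have hslope := hf.slope_le_recessionSlope (div_nonneg hs ht.le) (div_pos hd ht)
  induction h : recessionSlope f using EReal.rec with
  | bot => simp [h] at hslope
  | top =>
    rw [EReal.coe_mul_top_of_pos hd, EReal.add_top_of_ne_bot (EReal.coe_ne_bot _)]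
    exact le_top
  | coe l =>
    rw [h, EReal.coe_le_coe_iff, div_le_iff₀ (div_pos hd ht), ← add_div] at hslope
    rw [← EReal.coe_mul, ← EReal.coe_add, EReal.coe_le_coe_iff]
    have hscaled := mul_le_mul_of_nonneg_left hslope ht.le
    have : t * (l * (d / t)) = d * l := by field_simp
    linarith

lemma perspective_add_le {f : ℝ → ℝ} (hf : ConvexOn ℝ (Set.Ici 0) f) {s₁ s₂ t₁ t₂ : ℝ}
    (hs₁ : 0 ≤ s₁) (hs₂ : 0 ≤ s₂) (ht₁ : 0 ≤ t₁) (ht₂ : 0 ≤ t₂) :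
    perspective f (s₁ + s₂) (t₁ + t₂) ≤ perspective f s₁ t₁ + perspective f s₂ t₂ := by
  rcases ht₁.eq_or_lt with rfl | ht₁ <;> rcases ht₂.eq_or_lt with rfl | ht₂
  · simp only [perspective, add_zero, lt_irrefl, if_false, EReal.coe_add]
    exact (EReal.right_distrib_of_nonneg (EReal.coe_nonneg.2 hs₁) (EReal.coe_nonneg.2 hs₂)).le
  · rw [zero_add, add_comm s₁, add_comm (perspective f s₁ 0)]
    exact perspective_add_left_le hf hs₂ hs₁ ht₂
  · rw [add_zero]
    exact perspective_add_left_le hf hs₁ hs₂ ht₁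
  · simp only [perspective, add_pos ht₁ ht₂, ht₁, ht₂, if_true, ← EReal.coe_add,
      EReal.coe_le_coe_iff]
    exact hf.real_perspective_add_le hs₁ hs₂ ht₁ ht₂

lemma perspective_sum_le {f : ℝ → ℝ} (hf : ConvexOn ℝ (Set.Ici 0) f) {ι : Type*}
    (s : Finset ι) {u v : ι → ℝ} (hu : ∀ i ∈ s, 0 ≤ u i) (hv : ∀ i ∈ s, 0 ≤ v i) :
    perspective f (∑ i ∈ s, u i) (∑ i ∈ s, v i) ≤ ∑ i ∈ s, perspective f (u i) (v i) := by
  simpa only [Prod.fst_sum, Prod.snd_sum] using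
    le_sum_of_subadditive_on_pred (fun w : ℝ × ℝ => perspective f w.1 w.2)
      (fun w => 0 ≤ w.1 ∧ 0 ≤ w.2) (by simp [perspective])
      (fun v w hv hw => perspective_add_le hf hv.1 hw.1 hv.2 hw.2)
      (fun v w hv hw => ⟨add_nonneg hv.1 hw.1, add_nonneg hv.2 hw.2⟩)
      (fun i => (u i, v i)) fun i hi => ⟨hu i hi, hv i hi⟩

theorem fDiv_stocApply_le {X Y : Type*} [Fintype X] [Fintype Y] {f : ℝ → ℝ}
    (hf : ConvexOn ℝ (Set.Ici 0) f) {P : Y → X → ℝ} (hP : IsStochastic P) {p0 p1 : X → ℝ}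
    (hp0 : ∀ x, 0 ≤ p0 x) (hp1 : ∀ x, 0 ≤ p1 x) :
    fDiv f (stocApply P p0) (stocApply P p1) ≤ fDiv f p0 p1 := by
  calc fDiv f (stocApply P p0) (stocApply P p1)
      = ∑ y, perspective f (stocApply P p0 y) (stocApply P p1 y) :=
        fDiv_eq_sum_perspective f
          (fun y => sum_nonneg fun x _ => mul_nonneg (hP.1 y x) (hp0 x)) _
    _ ≤ ∑ y, ∑ x, perspective f (P y x * p0 x) (P y x * p1 x) :=
        sum_le_sum fun y _ => perspective_sum_le hf univ
          (fun x _ => mul_nonneg (hP.1 y x) (hp0 x)) fun x _ => mul_nonneg (hP.1 y x) (hp1 x)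
    _ = ∑ y, ∑ x, (P y x : EReal) * perspective f (p0 x) (p1 x) := by
        simp only [perspective_mul f (hP.1 _ _)]
    _ = ∑ x, perspective f (p0 x) (p1 x) := by
        rw [sum_comm]
        refine sum_congr rfl fun x _ => ?_
        rw [EReal.finsetSum_coe_mul_of_nonneg fun y _ => hP.1 y x, hP.2 x, EReal.coe_one, one_mul]
    _ = fDiv f p0 p1 := (fDiv_eq_sum_perspective f hp0 p1).symm

section MaxAffine

variable {Y : Type*} [Fintype Y] [Nonempty Y]

noncomputable def maxAffine (a b : Y → ℝ) (t : ℝ) : ℝ :=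
  univ.sup' univ_nonempty fun y => a y * t + b y

lemma convexOn_maxAffine (a b : Y → ℝ) : ConvexOn ℝ Set.univ (maxAffine a b) := by
  have : maxAffine a b = univ.sup' univ_nonempty fun y t => a y * t + b y := by
    ext t; simp [maxAffine, Finset.sup'_apply]
  rw [this]
  refine sup'_induction _ _ (fun _ h₁ _ h₂ => h₁.sup h₂) fun y _ => ?_
  exact ⟨convex_univ, fun x _ z _ α β _ _ hαβ => le_of_eq <| by
    simp only [smul_eq_mul]; linear_combination (-b y) * hαβ⟩

lemma continuous_maxAffine (a b : Y → ℝ) : Continuous (maxAffine a b) :=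
  Continuous.finset_sup'_apply _ fun y _ => by fun_prop

lemma recessionSlope_maxAffine (a b : Y → ℝ) :
    recessionSlope (maxAffine a b) = (univ.sup' univ_nonempty a : ℝ) := by
  refine recessionSlope_eq_of_tendsto ?_
  have hlim : Tendsto (fun lam : ℝ => univ.sup' univ_nonempty fun y => a y + b y / lam) atTop
      (𝓝 (univ.sup' univ_nonempty a)) :=
    Tendsto.finset_sup'_nhds_apply _ fun y _ => by
      simpa using tendsto_const_nhds.add (tendsto_const_nhds.div_atTop (tendsto_id (α := ℝ)))
  refine hlim.congr' ((eventually_gt_atTop 0).mono fun lam hlam => ?_)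
  dsimp only
  rw [maxAffine, sup'_div₀ hlam.le]
  exact sup'_congr _ rfl fun y _ => by field_simp

lemma perspective_maxAffine (a b : Y → ℝ) {s t : ℝ} (hs : 0 ≤ s) (ht : 0 ≤ t) :
    perspective (maxAffine a b) s t
      = (univ.sup' univ_nonempty fun y => a y * s + b y * t : ℝ) := by
  rcases ht.eq_or_lt with rfl | ht
  · simp only [perspective, lt_irrefl, if_false, recessionSlope_maxAffine, ← EReal.coe_mul,
      mul_zero, add_zero, mul_comm s, sup'_mul₀ hs]
  · simp only [perspective, ht, if_true, maxAffine, mul_comm t, sup'_mul₀ ht.le]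
    congr 2; ext y; field_simp

lemma fDiv_maxAffine {X : Type*} [Fintype X] (a b : Y → ℝ) {p0 p1 : X → ℝ}
    (hp0 : ∀ x, 0 ≤ p0 x) (hp1 : ∀ x, 0 ≤ p1 x) :
    fDiv (maxAffine a b) p0 p1
      = ((∑ x, univ.sup' univ_nonempty fun y => a y * p0 x + b y * p1 x : ℝ) : EReal) := by
  rw [fDiv_eq_sum_perspective _ hp0, EReal.coe_finsetSum]
  exact sum_congr rfl fun x _ => perspective_maxAffine a b (hp0 x) (hp1 x)

end MaxAffine

section Stochastic

variable {X Y : Type*} [Fintype X] [Fintype Y]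

lemma convex_setOf_isStochastic : Convex ℝ {P : Y → X → ℝ | IsStochastic P} := by
  intro P hP Q hQ α β hα hβ hαβ
  refine ⟨fun y x => ?_, fun x => ?_⟩
  · simpa using add_nonneg (mul_nonneg hα (hP.1 y x)) (mul_nonneg hβ (hQ.1 y x))
  · simp [sum_add_distrib, ← mul_sum, hP.2 x, hQ.2 x, hαβ]

lemma isCompact_setOf_isStochastic : IsCompact {P : Y → X → ℝ | IsStochastic P} := by
  have hbox : IsCompact (Set.univ.pi fun _ : Y => Set.univ.pi fun _ : X => Set.Icc (0 : ℝ) 1) :=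
    isCompact_univ_pi fun _ => isCompact_univ_pi fun _ => isCompact_Icc
  refine hbox.of_isClosed_subset ?_ fun P hP => ?_
  · have hset : {P : Y → X → ℝ | IsStochastic P}
        = (⋂ y, ⋂ x, {P | 0 ≤ P y x}) ∩ ⋂ x, {P | ∑ y, P y x = 1} := by
      ext P; simp [IsStochastic]
    rw [hset]
    refine (isClosed_iInter fun y => isClosed_iInter fun x => isClosed_le ?_ ?_).inter
      (isClosed_iInter fun x => isClosed_eq ?_ ?_) <;> fun_prop
  · simp only [Set.mem_pi, Set.mem_univ, Set.mem_Icc, forall_const]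
    intro y x
    refine ⟨hP.1 y x, ?_⟩
    calc P y x ≤ ∑ y', P y' x := single_le_sum (fun y' _ => hP.1 y' x) (mem_univ y)
      _ = 1 := hP.2 x

noncomputable def stocApplyLinear (p : X → ℝ) : (Y → X → ℝ) →ₗ[ℝ] (Y → ℝ) where
  toFun P := stocApply P p
  map_add' P Q := by ext y; simp [stocApply, add_mul, sum_add_distrib]
  map_smul' c P := by ext y; simp [stocApply, mul_sum, mul_assoc]

variable [DecidableEq Y]

def deterministicMatrix (g : X → Y) : Y → X → ℝ := fun y x => if g x = y then 1 else 0

lemma isStochastic_deterministicMatrix (g : X → Y) : IsStochastic (deterministicMatrix g) :=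
  ⟨fun y x => by unfold deterministicMatrix; split_ifs <;> norm_num,
    fun x => by simp [deterministicMatrix]⟩

lemma sum_mul_stocApply_deterministicMatrix (g : X → Y) (a : Y → ℝ) (p : X → ℝ) :
    ∑ y, a y * stocApply (deterministicMatrix g) p y = ∑ x, a (g x) * p x := by
  simp only [stocApply, deterministicMatrix, mul_sum, ite_mul, one_mul, zero_mul, mul_ite, mul_zero]
  rw [sum_comm]
  simp

end Stochastic

lemma exists_sum_mul_lt_of_notMem {Y : Type*} [Fintype Y] {S : Set ((Y → ℝ) × (Y → ℝ))}
    (hconv : Convex ℝ S) (hclosed : IsClosed S) {r s : Y → ℝ} (h : (r, s) ∉ S) :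
    ∃ a b : Y → ℝ, ∀ w ∈ S,
      ∑ y, (a y * w.1 y + b y * w.2 y) < ∑ y, (a y * r y + b y * s y) := by
  classical
  obtain ⟨φ, u, hS, hrs⟩ := geometric_hahn_banach_closed_point hconv hclosed h
  set a : Y → ℝ := fun y => φ ((fun j => if y = j then 1 else 0), 0)
  set b : Y → ℝ := fun y => φ (0, fun j => if y = j then 1 else 0)
  have hφ : ∀ w, φ w = ∑ y, (a y * w.1 y + b y * w.2 y) := by
    intro w
    have hsplit : φ w = φ (w.1, 0) + φ (0, w.2) := by rw [← map_add]; simp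
    have h₁ : φ (w.1, 0) = ∑ y, w.1 y * a y := by
      simpa using
        LinearMap.pi_apply_eq_sum_univ (φ.toLinearMap ∘ₗ LinearMap.inl ℝ _ (Y → ℝ)) w.1
    have h₂ : φ (0, w.2) = ∑ y, w.2 y * b y := by
      simpa using
        LinearMap.pi_apply_eq_sum_univ (φ.toLinearMap ∘ₗ LinearMap.inr ℝ (Y → ℝ) _) w.2
    rw [hsplit, h₁, h₂, ← sum_add_distrib]
    simp only [mul_comm]
  refine ⟨a, b, fun w hw => ?_⟩
  rw [← hφ, ← hφ (r, s)]
  exact (hS w hw).trans hrs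

theorem exists_stochastic_of_fDiv_maxAffine_le {X Y : Type*} [Fintype X] [Fintype Y]
    [Nonempty Y] {p0 p1 : X → ℝ} {q0 q1 : Y → ℝ} (hp0 : ∀ x, 0 ≤ p0 x) (hp1 : ∀ x, 0 ≤ p1 x)
    (hq0 : ∀ y, 0 ≤ q0 y) (hq1 : ∀ y, 0 ≤ q1 y)
    (h : ∀ a b : Y → ℝ, fDiv (maxAffine a b) q0 q1 ≤ fDiv (maxAffine a b) p0 p1) :
    ∃ P : Y → X → ℝ, IsStochastic P ∧ stocApply P p0 = q0 ∧ stocApply P p1 = q1 := by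
  classical
  set A := (stocApplyLinear (Y := Y) p0).prod (stocApplyLinear p1)
  by_contra hno
  have hnotMem : (q0, q1) ∉ A '' {P | IsStochastic P} := by
    rintro ⟨P, hP, hPq⟩
    exact hno ⟨P, hP, congrArg Prod.fst hPq, congrArg Prod.snd hPq⟩
  obtain ⟨a, b, hsep⟩ := exists_sum_mul_lt_of_notMem (convex_setOf_isStochastic.linear_image A)
    (isCompact_setOf_isStochastic.image A.continuous_of_finiteDimensional).isClosed hnotMem
  choose g hg using fun x =>
    exists_mem_eq_sup' univ_nonempty fun y => a y * p0 x + b y * p1 x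
  have hdet : ∑ y, (a y * stocApply (deterministicMatrix g) p0 y
      + b y * stocApply (deterministicMatrix g) p1 y) < ∑ y, (a y * q0 y + b y * q1 y) :=
    hsep _ ⟨deterministicMatrix g, isStochastic_deterministicMatrix g, rfl⟩
  rw [sum_add_distrib, sum_mul_stocApply_deterministicMatrix,
    sum_mul_stocApply_deterministicMatrix] at hdet
  have hfDiv := h a b
  rw [fDiv_maxAffine a b hq0 hq1, fDiv_maxAffine a b hp0 hp1, EReal.coe_le_coe_iff] at hfDiv
  have hq : ∑ y, (a y * q0 y + b y * q1 y)
      ≤ ∑ y, univ.sup' univ_nonempty fun y' => a y' * q0 y + b y' * q1 y :=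
    sum_le_sum fun y _ => le_sup' (fun y' => a y' * q0 y + b y' * q1 y) (mem_univ y)
  have hp : ∑ x, univ.sup' univ_nonempty (fun y => a y * p0 x + b y * p1 x)
      = ∑ x, a (g x) * p0 x + ∑ x, b (g x) * p1 x := by
    rw [← sum_add_distrib]
    exact sum_congr rfl fun x _ => (hg x).2
  linarith

/-- (Classical comparison of dichotomies.) A stochastic matrix
`P` with `P p0 = q0`, `P p1 = q1` exists iff `D_f(p0‖p1) ≥ D_f(q0‖q1)` for every
convex continuous `f : [0,∞) → ℝ`. -/
theorem stochastic_exists_iff_fDiv_le {X Y : Type*} [Fintype X] [Fintype Y]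
    (p0 p1 : X → ℝ) (hp0 : ProbVec p0) (hp1 : ProbVec p1)
    (q0 q1 : Y → ℝ) (hq0 : ProbVec q0) (hq1 : ProbVec q1) :
    (∃ P : Y → X → ℝ, IsStochastic P ∧ stocApply P p0 = q0 ∧ stocApply P p1 = q1) ↔
      ∀ f : ℝ → ℝ, ConvexOn ℝ (Set.Ici 0) f → ContinuousOn f (Set.Ici 0) →
        fDiv f q0 q1 ≤ fDiv f p0 p1 := by
  constructor
  · rintro ⟨P, hP, rfl, rfl⟩ f hf -
    exact fDiv_stocApply_le hf hP hp0.1 hp1.1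
  · intro h
    have : Nonempty Y := by
      by_contra hY
      simpa [not_nonempty_iff.1 hY] using hq0.2
    refine exists_stochastic_of_fDiv_maxAffine_le hp0.1 hp1.1 hq0.1 hq1.1 fun a b => ?_
    exact h _ ((convexOn_maxAffine a b).subset (Set.subset_univ _) (convex_Ici 0))
      (continuous_maxAffine a b).continuousOn
end
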